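/- arXiv:1108.5001 — 9 statements merged into one kernel-verified Lean document; each statement's English description precedes it below -/
import Mathlib

section
/- Let β ≥ 0, c ≥ 0, t > 1 and M ≥ 1. Let φ : ℝ^{β+2} → ℝ be c-Lipschitz for the sup metric, and let φ_t : ℝ^{β+2} → ℝ satisfy |φ_t(v) − φ(v)| ≤ log_t M for all v. Given any x : ℕ → ℝ and y_0 ∈ ℝ, define y_{i+1} = φ(y_i, x_i, …, x_{i+β}) and y'_{i+1} = φ_t(y'_i, x_i, …, x_{i+β}) with y'_0 = y_0. Then |y_i − y'_i| ≤ P_{i−1}(c)·log_t M for all i ≥ 0. -/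
/-!
The discrepancy `dᵢ = |yᵢ - y'ᵢ|` satisfies `d₀ = 0` and `dᵢ₊₁ ≤ c · dᵢ + ε` with
`ε = log_t M`: the two arguments of step `i` differ only in their first coordinate, so the
Lipschitz bound contributes `c · dᵢ` and the closeness of `φ_t` to `φ` contributes `ε`.
Unrolling this linear recurrence gives `dᵢ ≤ (1 + c + ⋯ + c^{i-1}) · ε`.
-/

lemma Fin.dist_cons_cons_left {α : Type*} [PseudoMetricSpace α] {n : ℕ} (a b : α)
    (f : Fin n → α) : dist (Fin.cons a f : Fin (n + 1) → α) (Fin.cons b f) = dist a b := by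
  rw [← Fin.insertNth_zero', ← Fin.insertNth_zero', Fin.dist_insertNth_insertNth, dist_self,
    max_eq_left dist_nonneg]

lemma le_geom_sum_mul_of_le_mul_add {R : Type*} [CommSemiring R] [PartialOrder R]
    [IsOrderedRing R] {c ε : R} (hc : 0 ≤ c) {d : ℕ → R} (h0 : d 0 = 0)
    (hstep : ∀ i, d (i + 1) ≤ c * d i + ε) (i : ℕ) :
    d i ≤ (∑ k ∈ Finset.range i, c ^ k) * ε := by
  induction i with
  | zero => simp [h0]
  | succ i ih =>
    calc d (i + 1) ≤ c * d i + ε := hstep i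
      _ ≤ c * ((∑ k ∈ Finset.range i, c ^ k) * ε) + ε := by gcongr
      _ = (∑ k ∈ Finset.range (i + 1), c ^ k) * ε := by rw [geom_sum_succ]; ring

lemma abs_sub_le_mul_dist_add {α : Type*} [PseudoMetricSpace α] {φ ψ : α → ℝ} {c ε : ℝ}
    (hlip : ∀ v w, |φ v - φ w| ≤ c * dist v w) (hclose : ∀ v, |ψ v - φ v| ≤ ε) (v w : α) :
    |φ v - ψ w| ≤ c * dist v w + ε :=
  calc |φ v - ψ w| ≤ |φ v - φ w| + |φ w - ψ w| := abs_sub_le _ _ _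
    _ ≤ c * dist v w + ε := add_le_add (hlip v w) (abs_sub_comm (ψ w) (φ w) ▸ hclose w)

theorem statement4_general (β : ℕ) (c t M : ℝ) (hc : 0 ≤ c)
    (φ φt : (Fin (β + 2) → ℝ) → ℝ)
    (hlip : ∀ v w : Fin (β + 2) → ℝ, |φ v - φ w| ≤ c * dist v w)
    (hclose : ∀ v : Fin (β + 2) → ℝ, |φt v - φ v| ≤ Real.log M / Real.log t)
    (x y y' : ℕ → ℝ) (h0 : y' 0 = y 0)
    (hy : ∀ i : ℕ, y (i + 1) = φ (Fin.cons (y i) (fun k : Fin (β + 1) => x (i + (k : ℕ)))))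
    (hy' : ∀ i : ℕ, y' (i + 1) = φt (Fin.cons (y' i) (fun k : Fin (β + 1) => x (i + (k : ℕ))))) :
    ∀ i : ℕ, |y i - y' i| ≤ (∑ k ∈ Finset.range i, c ^ k) * (Real.log M / Real.log t) := by
  refine le_geom_sum_mul_of_le_mul_add hc (by simp [h0]) fun i => ?_
  rw [hy, hy', ← Real.dist_eq (y i), ← Fin.dist_cons_cons_left (y i) (y' i)]
  exact abs_sub_le_mul_dist_add hlip hclose _ _

/-- comparison between the iterated dynamics of a `c`-Lipschitz relative
`(max,+)`-function `φ` and of a function `φ_t` uniformly `log_t M`-close to it: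
`|y_i − y'_i| ≤ P_{i−1}(c) · log_t M` for all `i`, where `P_{i-1}(c) = ∑_{k<i} c^k`. -/
theorem statement4 (β : ℕ) (c t M : ℝ) (hc : 0 ≤ c) (ht : 1 < t) (hM : 1 ≤ M)
    (φ φt : (Fin (β + 2) → ℝ) → ℝ)
    (hlip : ∀ v w : Fin (β + 2) → ℝ, |φ v - φ w| ≤ c * dist v w)
    (hclose : ∀ v : Fin (β + 2) → ℝ, |φt v - φ v| ≤ Real.log M / Real.log t)
    (x y y' : ℕ → ℝ) (h0 : y' 0 = y 0)
    (hy : ∀ i : ℕ, y (i + 1) = φ (Fin.cons (y i) (fun k : Fin (β + 1) => x (i + (k : ℕ)))))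
    (hy' : ∀ i : ℕ, y' (i + 1) = φt (Fin.cons (y' i) (fun k : Fin (β + 1) => x (i + (k : ℕ))))) :
    ∀ i : ℕ, |y i - y' i| ≤ (∑ k ∈ Finset.range i, c ^ k) * (Real.log M / Real.log t) :=
  statement4_general β c t M hc φ φt hlip hclose x y y' h0 hy hy'
end

section
/- Let c, T, I ≥ 0 and let p, q, x, y : ℕ×ℕ → ℝ be double sequences such that |p_i^0 − x_i^0| ≤ I and |q_0^j − y_0^j| ≤ I for all i, j, and such that for all i, j ≥ 0 both |p_i^{j+1} − x_i^{j+1}| and |q_{i+1}^j − y_{i+1}^j| are ≤ c·max(|q_i^j − y_i^j|, |p_i^j − x_i^j|) + T. Then for all i, j ≥ 0: |p_i^{j+1} − x_i^{j+1}| ≤ P_{i+j}(c)·T + c̃^{i+j+1}·I and |q_{i+1}^j − y_{i+1}^j| ≤ P_{i+j}(c)·T + c̃^{i+j+1}·I. In particular, if the initial values agree (I = 0) these quantities are ≤ P_{i+j}(c)·T, and if c < 1 they are uniformly bounded. -/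
/-!
The bound `S n = geomBound c T I n = P_{n-1}(c) T + c̃ⁿ I` satisfies `I ≤ S n` and
`c S n + T ≤ S (n + 1)`, so `S` is a supersolution of the recursion, and induction along the
antidiagonals `i + j = n` bounds both error sequences at `(i, j)` by `S (i + j)`. For `c < 1` we have `c̃ = 1` and `P_n(c) ≤ 1 / (1 - c)`.
-/

open Finset

theorem le_of_le_mul_max_add {a b : ℕ → ℕ → ℝ} {c T I : ℝ} {S : ℕ → ℝ} (hc : 0 ≤ c)
    (ha₀ : ∀ i, a i 0 ≤ I) (hb₀ : ∀ j, b 0 j ≤ I)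
    (ha : ∀ i j, a i (j + 1) ≤ c * max (b i j) (a i j) + T)
    (hb : ∀ i j, b (i + 1) j ≤ c * max (b i j) (a i j) + T)
    (hIS : ∀ n, I ≤ S n) (hS : ∀ n, c * S n + T ≤ S (n + 1)) (i j : ℕ) :
    a i j ≤ S (i + j) ∧ b i j ≤ S (i + j) := by
  induction h : i + j generalizing i j with
  | zero =>
    obtain ⟨rfl, rfl⟩ := Nat.add_eq_zero_iff.mp h
    exact ⟨(ha₀ 0).trans (hIS 0), (hb₀ 0).trans (hIS 0)⟩
  | succ n ih =>
    have step : ∀ i j, i + j = n → c * max (b i j) (a i j) + T ≤ S (n + 1) := by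
      intro i j hij
      obtain ⟨hab, hbb⟩ := ih i j hij
      calc c * max (b i j) (a i j) + T ≤ c * S n + T := by gcongr; exact max_le hbb hab
        _ ≤ S (n + 1) := hS n
    constructor
    · cases j with
      | zero => exact (ha₀ i).trans (hIS _)
      | succ j => exact (ha i j).trans (step i j (by omega))
    · cases i with
      | zero => exact (hb₀ j).trans (hIS _)
      | succ i => exact (hb i j).trans (step i j (by omega))

noncomputable def geomBound (c T I : ℝ) (n : ℕ) : ℝ :=
  (∑ k ∈ range n, c ^ k) * T + max c 1 ^ n * I

section geomBound

variable {c T I : ℝ}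

theorem le_geomBound (hc : 0 ≤ c) (hT : 0 ≤ T) (hI : 0 ≤ I) (n : ℕ) : I ≤ geomBound c T I n := by
  have hsum : 0 ≤ (∑ k ∈ range n, c ^ k) * T :=
    mul_nonneg (sum_nonneg fun k _ => pow_nonneg hc k) hT
  have hpow : I ≤ max c 1 ^ n * I := le_mul_of_one_le_left hI (one_le_pow₀ (le_max_right c 1))
  unfold geomBound
  linarith

theorem mul_geomBound_add_le (hc : 0 ≤ c) (hI : 0 ≤ I) (n : ℕ) :
    c * geomBound c T I n + T ≤ geomBound c T I (n + 1) := by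
  have hpow : c * max c 1 ^ n ≤ max c 1 ^ (n + 1) := by
    rw [pow_succ']
    exact mul_le_mul_of_nonneg_right (le_max_left c 1) (pow_nonneg (hc.trans (le_max_left c 1)) n)
  have hI' := mul_le_mul_of_nonneg_right hpow hI
  simp only [geomBound, geom_sum_succ]
  linarith

theorem geomBound_le_of_lt_one (hc : 0 ≤ c) (hT : 0 ≤ T) (hc₁ : c < 1) (n : ℕ) :
    geomBound c T I n ≤ T / (1 - c) + I := by
  have hsum : ∑ k ∈ range n, c ^ k ≤ 1 / (1 - c) := by
    have := geom_sum_Ico_le_of_lt_one (m := 0) (n := n) hc hc₁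
    rwa [pow_zero, ← range_eq_Ico] at this
  have hT' := mul_le_mul_of_nonneg_right hsum hT
  rw [geomBound, max_eq_right hc₁.le, one_pow, one_mul]
  rw [one_div_mul_eq_div] at hT'
  linarith

end geomBound

/-- basic estimate for double sequences (Mealy case).
`P_{i+j}(c) = ∑_{k=0}^{i+j} c^k` and `c̃ = max c 1`. -/
theorem statement5 (c T I : ℝ) (hc : 0 ≤ c) (hT : 0 ≤ T) (hI : 0 ≤ I)
    (p q x y : ℕ → ℕ → ℝ)
    (hp0 : ∀ i : ℕ, |p i 0 - x i 0| ≤ I) (hq0 : ∀ j : ℕ, |q 0 j - y 0 j| ≤ I)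
    (hp : ∀ i j : ℕ, |p i (j + 1) - x i (j + 1)|
        ≤ c * max (|q i j - y i j|) (|p i j - x i j|) + T)
    (hq : ∀ i j : ℕ, |q (i + 1) j - y (i + 1) j|
        ≤ c * max (|q i j - y i j|) (|p i j - x i j|) + T) :
    (∀ i j : ℕ,
      |p i (j + 1) - x i (j + 1)|
          ≤ (∑ k ∈ Finset.range (i + j + 1), c ^ k) * T + (max c 1) ^ (i + j + 1) * I ∧
      |q (i + 1) j - y (i + 1) j|
          ≤ (∑ k ∈ Finset.range (i + j + 1), c ^ k) * T + (max c 1) ^ (i + j + 1) * I) ∧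
    (I = 0 → ∀ i j : ℕ,
      |p i (j + 1) - x i (j + 1)| ≤ (∑ k ∈ Finset.range (i + j + 1), c ^ k) * T ∧
      |q (i + 1) j - y (i + 1) j| ≤ (∑ k ∈ Finset.range (i + j + 1), c ^ k) * T) ∧
    (c < 1 → ∃ K : ℝ, ∀ i j : ℕ,
      |p i (j + 1) - x i (j + 1)| ≤ K ∧ |q (i + 1) j - y (i + 1) j| ≤ K) := by
  have bound := le_of_le_mul_max_add (a := fun i j => |p i j - x i j|)
    (b := fun i j => |q i j - y i j|) hc hp0 hq0 hp hq (le_geomBound hc hT hI)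
    (mul_geomBound_add_le hc hI)
  have main : ∀ i j : ℕ, |p i (j + 1) - x i (j + 1)| ≤ geomBound c T I (i + j + 1) ∧
      |q (i + 1) j - y (i + 1) j| ≤ geomBound c T I (i + j + 1) := fun i j =>
    ⟨(bound i (j + 1)).1, by simpa only [Nat.add_right_comm] using (bound (i + 1) j).2⟩
  refine ⟨main, fun hI₀ i j => ?_, fun hc₁ => ⟨T / (1 - c) + I, fun i j => ?_⟩⟩
  · simpa only [geomBound, hI₀, mul_zero, add_zero] using main i j
  · have hK := geomBound_le_of_lt_one (I := I) hc hT hc₁ (i + j + 1)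
    exact ⟨(main i j).1.trans hK, (main i j).2.trans hK⟩
end

section
/- Let α, β ≥ 0 be integers, γ = max(α, β), and c, T, I ≥ 0. Let p, q, x, y : ℕ×ℕ → ℝ be double sequences with |p_i^0 − x_i^0| ≤ I and |q_0^j − y_0^j| ≤ I for all i, j, satisfying for all i, j ≥ 0: |p_i^{j+1} − x_i^{j+1}| ≤ c·max(|q_i^j − y_i^j|, |p_i^j − x_i^j|, …, |p_{i+α}^j − x_{i+α}^j|) + T and |q_{i+1}^j − y_{i+1}^j| ≤ c·max(|q_i^j − y_i^j|, |p_i^j − x_i^j|, …, |p_{i+β}^j − x_{i+β}^j|) + T. Then for all i, j ≥ 0: |p_i^{j+1} − x_i^{j+1}| ≤ P_{i+j(γ+1)}(c)·T + c̃^{i+1+j(γ+1)}·I and |q_{i+1}^j − y_{i+1}^j| ≤ P_{i+j(γ+1)}(c)·T + c̃^{i+1+j(γ+1)}·I. -/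
/-!
Write `a = |p - x|`, `b = |q - y|` and `F n = P_{n-1}(c) T + c̃ⁿ I`. Each error is at most `c`
times the largest of finitely many earlier errors plus `T`, and `F` is monotone, dominates `I`
and satisfies `c F n + T ≤ F (n + 1)`; so it suffices to give every entry a level such that the
errors it depends on all sit at lower levels. With `γ = max α β`, the levels `i + j(γ + 1)` for
`b i j` and `i + j(γ + 1) - γ` for `a i j` work: one step back in `j` costs `γ + 1` levels,
which pays for the lookahead `k ≤ γ` in `i`.
-/

open Finset

noncomputable def errorBound (c T I : ℝ) (n : ℕ) : ℝ :=
  (∑ k ∈ range n, c ^ k) * T + max c 1 ^ n * I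

section errorBound

variable {c T I : ℝ}

lemma errorBound_mono (hc : 0 ≤ c) (hT : 0 ≤ T) (hI : 0 ≤ I) : Monotone (errorBound c T I) :=
  fun _ _ h => add_le_add
    (mul_le_mul_of_nonneg_right
      (sum_le_sum_of_subset_of_nonneg (range_subset_range.mpr h) fun _ _ _ => pow_nonneg hc _) hT)
    (mul_le_mul_of_nonneg_right (pow_le_pow_right₀ (le_max_right c 1) h) hI)

lemma le_errorBound (hc : 0 ≤ c) (hT : 0 ≤ T) (hI : 0 ≤ I) (n : ℕ) :
    I ≤ errorBound c T I n := by
  have hsum : 0 ≤ (∑ k ∈ range n, c ^ k) * T :=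
    mul_nonneg (sum_nonneg fun _ _ => pow_nonneg hc _) hT
  have hpow : I ≤ max c 1 ^ n * I := le_mul_of_one_le_left hI (one_le_pow₀ (le_max_right c 1))
  unfold errorBound
  linarith

lemma mul_errorBound_add_le (hc : 0 ≤ c) (hI : 0 ≤ I) (n : ℕ) :
    c * errorBound c T I n + T ≤ errorBound c T I (n + 1) := by
  have hpow : c * max c 1 ^ n ≤ max c 1 ^ (n + 1) := by
    rw [pow_succ']
    exact mul_le_mul_of_nonneg_right (le_max_left c 1) (pow_nonneg (hc.trans (le_max_left c 1)) n)
  have hpowI : c * max c 1 ^ n * I ≤ max c 1 ^ (n + 1) * I := mul_le_mul_of_nonneg_right hpow hI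
  unfold errorBound
  rw [geom_sum_succ]
  linarith

end errorBound

section recursion

variable {c T I : ℝ} {F : ℕ → ℝ}

lemma mul_max_sup'_add_le (hc : 0 ≤ c) (hstep : ∀ n, c * F n + T ≤ F (n + 1))
    {s : Finset ℕ} (hs : s.Nonempty) {u : ℝ} {f : ℕ → ℝ} {n : ℕ}
    (hu : u ≤ F n) (hf : ∀ k ∈ s, f k ≤ F n) : c * max u (s.sup' hs f) + T ≤ F (n + 1) :=
  (add_le_add_left (mul_le_mul_of_nonneg_left (max_le hu (sup'_le hs f hf)) hc) T).trans
    (hstep n)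

lemma column_le_of_recursion (hc : 0 ≤ c) (hI : ∀ n, I ≤ F n)
    (hstep : ∀ n, c * F n + T ≤ F (n + 1)) {β m : ℕ} {a b : ℕ → ℝ} (hb0 : b 0 ≤ I)
    (hb : ∀ i, b (i + 1) ≤ c * max (b i) ((range (β + 1)).sup' nonempty_range_add_one
      fun k => a (i + k)) + T)
    (ha : ∀ i k, k ≤ β → a (i + k) ≤ F (i + m)) (i : ℕ) : b i ≤ F (i + m) := by
  induction i with
  | zero => simpa using hb0.trans (hI m)
  | succ i ih =>
    rw [add_right_comm]
    exact (hb i).trans <| mul_max_sup'_add_le hc hstep _ ih fun k hk =>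
      ha i k (mem_range_succ_iff.mp hk)

theorem le_of_recursion (hc : 0 ≤ c) (hI : ∀ n, I ≤ F n) (hF : Monotone F)
    (hstep : ∀ n, c * F n + T ≤ F (n + 1)) {α β γ : ℕ} (hα : α ≤ γ) (hβ : β ≤ γ)
    (a b : ℕ → ℕ → ℝ) (ha0 : ∀ i, a i 0 ≤ I) (hb0 : ∀ j, b 0 j ≤ I)
    (ha : ∀ i j, a i (j + 1) ≤ c * max (b i j) ((range (α + 1)).sup' nonempty_range_add_one
      fun k => a (i + k) j) + T)
    (hb : ∀ i j, b (i + 1) j ≤ c * max (b i j) ((range (β + 1)).sup' nonempty_range_add_one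
      fun k => a (i + k) j) + T) (j : ℕ) :
    (∀ i, a i j ≤ F (i + j * (γ + 1) - γ)) ∧ ∀ i, b i j ≤ F (i + j * (γ + 1)) := by
  have column : ∀ j, (∀ i, a i j ≤ F (i + j * (γ + 1) - γ)) →
      ∀ i, b i j ≤ F (i + j * (γ + 1)) :=
    fun j ha_j => column_le_of_recursion (a := (a · j)) hc hI hstep (hb0 j) (hb · j)
      fun i k hk => (ha_j (i + k)).trans (hF (show _ ≤ i + j * (γ + 1) by omega))
  induction j with
  | zero =>
    have ha_0 : ∀ i, a i 0 ≤ F (i + 0 * (γ + 1) - γ) := fun i => (ha0 i).trans (hI _)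
    exact ⟨ha_0, column 0 ha_0⟩
  | succ j ih =>
    obtain ⟨ha_j, hb_j⟩ := ih
    have ha_succ : ∀ i, a i (j + 1) ≤ F (i + (j + 1) * (γ + 1) - γ) := by
      intro i
      have hlevel : i + (j + 1) * (γ + 1) - γ = i + j * (γ + 1) + 1 := by rw [add_one_mul]; omega
      rw [hlevel]
      exact (ha i j).trans <| mul_max_sup'_add_le hc hstep _ (hb_j i) fun k hk =>
        (ha_j (i + k)).trans (hF (by have := mem_range_succ_iff.mp hk; omega))
    exact ⟨ha_succ, column (j + 1) ha_succ⟩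

end recursion

/-- general estimate for double sequences with lookahead `α`, `β`,
`γ = max α β`, `P_n(c) = ∑_{k=0}^n c^k`, `c̃ = max c 1`. -/
theorem statement6 (α β : ℕ) (c T I : ℝ) (hc : 0 ≤ c) (hT : 0 ≤ T) (hI : 0 ≤ I)
    (p q x y : ℕ → ℕ → ℝ)
    (hp0 : ∀ i : ℕ, |p i 0 - x i 0| ≤ I) (hq0 : ∀ j : ℕ, |q 0 j - y 0 j| ≤ I)
    (hp : ∀ i j : ℕ, |p i (j + 1) - x i (j + 1)|
        ≤ c * max (|q i j - y i j|)
            ((Finset.range (α + 1)).sup' (Finset.nonempty_range_iff.mpr (Nat.succ_ne_zero α))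
              (fun k => |p (i + k) j - x (i + k) j|)) + T)
    (hq : ∀ i j : ℕ, |q (i + 1) j - y (i + 1) j|
        ≤ c * max (|q i j - y i j|)
            ((Finset.range (β + 1)).sup' (Finset.nonempty_range_iff.mpr (Nat.succ_ne_zero β))
              (fun k => |p (i + k) j - x (i + k) j|)) + T) :
    ∀ i j : ℕ,
      |p i (j + 1) - x i (j + 1)|
          ≤ (∑ k ∈ Finset.range (i + j * (max α β + 1) + 1), c ^ k) * T
            + (max c 1) ^ (i + 1 + j * (max α β + 1)) * I ∧
      |q (i + 1) j - y (i + 1) j|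
          ≤ (∑ k ∈ Finset.range (i + j * (max α β + 1) + 1), c ^ k) * T
            + (max c 1) ^ (i + 1 + j * (max α β + 1)) * I := by
  intro i j
  have bound := le_of_recursion hc (le_errorBound hc hT hI) (errorBound_mono hc hT hI)
    (mul_errorBound_add_le hc hI) (le_max_left α β) (le_max_right α β)
    (fun i j => |p i j - x i j|) (fun i j => |q i j - y i j|) hp0 hq0 hp hq
  have hlevel_p : i + (j + 1) * (max α β + 1) - max α β = i + j * (max α β + 1) + 1 := by
    rw [add_one_mul]; omega
  have hlevel_q : i + 1 + j * (max α β + 1) = i + j * (max α β + 1) + 1 := by ring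
  have hp_bound := (bound (j + 1)).1 i
  have hq_bound := (bound j).2 (i + 1)
  rw [hlevel_p] at hp_bound
  rw [hlevel_q] at hq_bound ⊢
  exact ⟨hp_bound, hq_bound⟩
end

section
/- Let ψ : ℝ^{α+2} → ℝ and φ : ℝ^{β+2} → ℝ be c-Lipschitz for the sup metric, t > 1, M ≥ 1, and let ψ_t, φ_t satisfy |ψ_t(v) − ψ(v)| ≤ log_t M and |φ_t(v) − φ(v)| ≤ log_t M for all v. Let (x(i,j), y(i,j)) be the state dynamics for (ψ, φ) and (x'(i,j), y'(i,j)) the state dynamics for (ψ_t, φ_t), both with the same initial data (x_i)_i, (y^j)_j. Then for all i, j ≥ 0: |x(i,j+1) − x'(i,j+1)| ≤ P_{i+j(γ+1)}(c)·log_t M and |y(i+1,j) − y'(i+1,j)| ≤ P_{i+j(γ+1)}(c)·log_t M. -/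
/-!
Write `e n = P_{n-1}(c) · log_t M`, so that `e (n + 1) = c · e n + log_t M`. A single update
compares `F v` with `F_t v'` through `F v'`: if every coordinate of `v - v'` is at most `e n`,
the Lipschitz bound and the closeness of `F_t` to `F` give an error at most `e (n + 1)`.
Sweeping a row of `y` from left to right, the error grows by one step per cell; the next
row of `x` reads up to `γ` cells further to the right, which costs the shift `γ + 1` per row.
-/

open Finset

theorem geom_sum_mono {c : ℝ} (hc : 0 ≤ c) : Monotone fun n ↦ ∑ k ∈ range n, c ^ k :=
  fun _ _ hmn ↦ sum_le_sum_of_subset_of_nonneg (range_subset_range.mpr hmn)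
    fun k _ _ ↦ pow_nonneg hc k

theorem abs_sub_le_of_lipschitz_of_close {ι : Type*} [Fintype ι] {F Ft : (ι → ℝ) → ℝ}
    {c r L : ℝ} (hc : 0 ≤ c) (hr : 0 ≤ r) (hF : ∀ v w, |F v - F w| ≤ c * dist v w)
    (hFt : ∀ v, |Ft v - F v| ≤ L) {v w : ι → ℝ} (hvw : ∀ i, |v i - w i| ≤ r) :
    |F v - Ft w| ≤ c * r + L := by
  have hdist : dist v w ≤ r := (dist_pi_le_iff hr).mpr fun i ↦ (Real.dist_eq _ _).trans_le (hvw i)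
  calc |F v - Ft w| ≤ |F v - F w| + |F w - Ft w| := abs_sub_le _ _ _
    _ ≤ c * r + L := add_le_add ((hF v w).trans (mul_le_mul_of_nonneg_left hdist hc))
        (abs_sub_comm (F w) _ ▸ hFt w)

theorem abs_apply_cons_sub_le {m : ℕ} {F Ft : (Fin (m + 1) → ℝ) → ℝ} {c L : ℝ}
    (hc : 0 ≤ c) (hL : 0 ≤ L) (hF : ∀ v w, |F v - F w| ≤ c * dist v w)
    (hFt : ∀ v, |Ft v - F v| ≤ L) {n : ℕ} {a b : ℝ} {f g : Fin m → ℝ}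
    (hab : |a - b| ≤ (∑ k ∈ range n, c ^ k) * L)
    (hfg : ∀ k, |f k - g k| ≤ (∑ k ∈ range n, c ^ k) * L) :
    |F (Fin.cons a f) - Ft (Fin.cons b g)| ≤ (∑ k ∈ range (n + 1), c ^ k) * L := by
  have hr : 0 ≤ (∑ k ∈ range n, c ^ k) * L := by positivity
  refine (abs_sub_le_of_lipschitz_of_close hc hr hF hFt fun i ↦ ?_).trans_eq ?_
  · cases i using Fin.cases with
    | zero => simpa using hab
    | succ k => simpa using hfg k
  · rw [geom_sum_succ]
    ring

structure IsStateDynamics {α β : ℕ} (ψ : (Fin (α + 2) → ℝ) → ℝ) (φ : (Fin (β + 2) → ℝ) → ℝ)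
    (x0 y0 : ℕ → ℝ) (x y : ℕ → ℕ → ℝ) : Prop where
  x_zero : ∀ i, x i 0 = x0 i
  y_zero : ∀ j, y 0 j = y0 j
  x_succ : ∀ i j, x i (j + 1) = ψ (Fin.cons (y i j) fun k : Fin (α + 1) ↦ x (i + k) j)
  y_succ : ∀ i j, y (i + 1) j = φ (Fin.cons (y i j) fun k : Fin (β + 1) ↦ x (i + k) j)

namespace IsStateDynamics

variable {α β : ℕ} {c L : ℝ} {ψ ψt : (Fin (α + 2) → ℝ) → ℝ} {φ φt : (Fin (β + 2) → ℝ) → ℝ}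
  {x0 y0 : ℕ → ℝ} {x y x' y' : ℕ → ℕ → ℝ}

theorem row_error_le (h : IsStateDynamics ψ φ x0 y0 x y)
    (h' : IsStateDynamics ψt φt x0 y0 x' y') (hc : 0 ≤ c) (hL : 0 ≤ L)
    (hψ : ∀ v w, |ψ v - ψ w| ≤ c * dist v w) (hφ : ∀ v w, |φ v - φ w| ≤ c * dist v w)
    (hψt : ∀ v, |ψt v - ψ v| ≤ L) (hφt : ∀ v, |φt v - φ v| ≤ L) {j m : ℕ}
    (hx : ∀ i, ∀ k ≤ max α β, |x (i + k) j - x' (i + k) j| ≤ (∑ l ∈ range (i + m), c ^ l) * L) :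
    (∀ i, |y i j - y' i j| ≤ (∑ l ∈ range (i + m), c ^ l) * L) ∧
      ∀ i, |x i (j + 1) - x' i (j + 1)| ≤ (∑ l ∈ range (i + m + 1), c ^ l) * L := by
  have hy : ∀ i, |y i j - y' i j| ≤ (∑ l ∈ range (i + m), c ^ l) * L := by
    intro i
    induction i with
    | zero =>
      rw [h.y_zero, h'.y_zero, sub_self, abs_zero]
      positivity
    | succ i ih =>
      rw [h.y_succ, h'.y_succ, Nat.add_right_comm]
      exact abs_apply_cons_sub_le hc hL hφ hφt ih
        fun k ↦ hx i k (k.is_le.trans (le_max_right α β))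
  refine ⟨hy, fun i ↦ ?_⟩
  rw [h.x_succ, h'.x_succ]
  exact abs_apply_cons_sub_le hc hL hψ hψt (hy i)
    fun k ↦ hx i k (k.is_le.trans (le_max_left α β))

theorem error_le (h : IsStateDynamics ψ φ x0 y0 x y)
    (h' : IsStateDynamics ψt φt x0 y0 x' y') (hc : 0 ≤ c) (hL : 0 ≤ L)
    (hψ : ∀ v w, |ψ v - ψ w| ≤ c * dist v w) (hφ : ∀ v w, |φ v - φ w| ≤ c * dist v w)
    (hψt : ∀ v, |ψt v - ψ v| ≤ L) (hφt : ∀ v, |φt v - φ v| ≤ L) (j : ℕ) :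
    (∀ i, |y i j - y' i j| ≤ (∑ l ∈ range (i + j * (max α β + 1)), c ^ l) * L) ∧
      ∀ i, |x i (j + 1) - x' i (j + 1)|
        ≤ (∑ l ∈ range (i + j * (max α β + 1) + 1), c ^ l) * L := by
  refine h.row_error_le h' hc hL hψ hφ hψt hφt fun i k hk ↦ ?_
  induction j generalizing i k with
  | zero =>
    rw [h.x_zero, h'.x_zero, sub_self, abs_zero]
    positivity
  | succ j ih =>
    refine ((h.row_error_le h' hc hL hψ hφ hψt hφt ih).2 (i + k)).trans ?_
    exact mul_le_mul_of_nonneg_right (geom_sum_mono hc (by nlinarith)) hL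

end IsStateDynamics

/-- uniform estimates between the state dynamics of a `c`-Lipschitz pair
`(ψ, φ)` and of a pair `(ψ_t, φ_t)` uniformly `log_t M`-close to it, with the same
initial data. Here `γ = max α β` and `P_n(c) = ∑_{k=0}^n c^k`. -/
theorem statement7 (α β : ℕ) (c t M : ℝ) (hc : 0 ≤ c) (ht : 1 < t) (hM : 1 ≤ M)
    (ψ ψt : (Fin (α + 2) → ℝ) → ℝ) (φ φt : (Fin (β + 2) → ℝ) → ℝ)
    (hψ : ∀ v w : Fin (α + 2) → ℝ, |ψ v - ψ w| ≤ c * dist v w)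
    (hφ : ∀ v w : Fin (β + 2) → ℝ, |φ v - φ w| ≤ c * dist v w)
    (hψt : ∀ v : Fin (α + 2) → ℝ, |ψt v - ψ v| ≤ Real.log M / Real.log t)
    (hφt : ∀ v : Fin (β + 2) → ℝ, |φt v - φ v| ≤ Real.log M / Real.log t)
    (x0 y0 : ℕ → ℝ) (x y x' y' : ℕ → ℕ → ℝ)
    (hx0 : ∀ i, x i 0 = x0 i) (hy0 : ∀ j, y 0 j = y0 j)
    (hx : ∀ i j, x i (j + 1) = ψ (Fin.cons (y i j) (fun k : Fin (α + 1) => x (i + (k : ℕ)) j)))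
    (hy : ∀ i j, y (i + 1) j = φ (Fin.cons (y i j) (fun k : Fin (β + 1) => x (i + (k : ℕ)) j)))
    (hx0' : ∀ i, x' i 0 = x0 i) (hy0' : ∀ j, y' 0 j = y0 j)
    (hx' : ∀ i j, x' i (j + 1)
        = ψt (Fin.cons (y' i j) (fun k : Fin (α + 1) => x' (i + (k : ℕ)) j)))
    (hy' : ∀ i j, y' (i + 1) j
        = φt (Fin.cons (y' i j) (fun k : Fin (β + 1) => x' (i + (k : ℕ)) j))) :
    ∀ i j : ℕ,
      |x i (j + 1) - x' i (j + 1)|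
          ≤ (∑ k ∈ Finset.range (i + j * (max α β + 1) + 1), c ^ k)
            * (Real.log M / Real.log t) ∧
      |y (i + 1) j - y' (i + 1) j|
          ≤ (∑ k ∈ Finset.range (i + j * (max α β + 1) + 1), c ^ k)
            * (Real.log M / Real.log t) := by
  have hL : 0 ≤ Real.log M / Real.log t := div_nonneg (Real.log_nonneg hM) (Real.log_pos ht).le
  have h : IsStateDynamics ψ φ x0 y0 x y := ⟨hx0, hy0, hx, hy⟩
  have h' : IsStateDynamics ψt φt x0 y0 x' y' := ⟨hx0', hy0', hx', hy'⟩
  intro i j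
  have hj := h.error_le h' hc hL hψ hφ hψt hφt j
  exact ⟨hj.2 i, Nat.add_right_comm i 1 _ ▸ hj.1 (i + 1)⟩
end

section
/- Let ψ : ℝ^{α+2} → ℝ and φ : ℝ^{β+2} → ℝ be c-Lipschitz for the sup metric. For l = 1, 2 let (x_l(i,j), y_l(i,j)) be the state dynamics for (ψ, φ) with initial data (x_i(l))_i, (y^j(l))_j, and suppose I ≥ 0 satisfies |x_i(1) − x_i(2)| ≤ I and |y^j(1) − y^j(2)| ≤ I for all i, j. Then for all i, j ≥ 0: |x_1(i,j+1) − x_2(i,j+1)| ≤ c̃^{i+1+j(γ+1)}·I and |y_1(i+1,j) − y_2(i+1,j)| ≤ c̃^{i+1+j(γ+1)}·I. -/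
/-!
Each update of the state dynamics applies a `c`-Lipschitz map to a window of the previous
values, so it multiplies a uniform bound on the input differences by at most `c̃`. Along a row
`j`, a bound `c̃^m M` on the `x`-differences over the windows starting at `m` propagates to
`|Δy(i, j)| ≤ c̃^i M` and `|Δx(i, j + 1)| ≤ c̃^(i+1) M`; since a window has length at most
`γ + 1`, passing to the next row costs the factor `c̃^(γ+1)`.
-/

structure IsStateDynamics_s8 {α β : ℕ} (ψ : (Fin (α + 2) → ℝ) → ℝ) (φ : (Fin (β + 2) → ℝ) → ℝ)
    (x y : ℕ → ℕ → ℝ) : Prop where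
  x_succ : ∀ i j, x i (j + 1) = ψ (Fin.cons (y i j) (fun k : Fin (α + 1) => x (i + (k : ℕ)) j))
  y_succ : ∀ i j, y (i + 1) j = φ (Fin.cons (y i j) (fun k : Fin (β + 1) => x (i + (k : ℕ)) j))

lemma abs_sub_cons_le {n : ℕ} {f : (Fin (n + 1) → ℝ) → ℝ} {c C M : ℝ}
    (hf : ∀ v w, |f v - f w| ≤ c * dist v w) (hcC : c ≤ C) (hC : 0 ≤ C)
    {a b : ℝ} {u v : Fin n → ℝ} (hab : |a - b| ≤ M) (huv : ∀ k, |u k - v k| ≤ M) :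
    |f (Fin.cons a u) - f (Fin.cons b v)| ≤ C * M := by
  have hdist : dist (Fin.cons a u : Fin (n + 1) → ℝ) (Fin.cons b v) ≤ M := by
    refine (dist_pi_le_iff ((abs_nonneg _).trans hab)).2 fun k => ?_
    refine Fin.cases ?_ (fun k => ?_) k
    · simpa [Real.dist_eq] using hab
    · simpa [Real.dist_eq] using huv k
  calc |f (Fin.cons a u) - f (Fin.cons b v)|
      ≤ c * dist (Fin.cons a u : Fin (n + 1) → ℝ) (Fin.cons b v) := hf _ _
    _ ≤ C * M := mul_le_mul hcC hdist dist_nonneg hC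

namespace IsStateDynamics_s8

variable {α β : ℕ} {ψ : (Fin (α + 2) → ℝ) → ℝ} {φ : (Fin (β + 2) → ℝ) → ℝ}
  {x₁ y₁ x₂ y₂ : ℕ → ℕ → ℝ} {c C M : ℝ}

lemma abs_sub_y_le (h₁ : IsStateDynamics_s8 ψ φ x₁ y₁) (h₂ : IsStateDynamics_s8 ψ φ x₂ y₂)
    (hφ : ∀ v w, |φ v - φ w| ≤ c * dist v w) (hcC : c ≤ C) (hC : 0 ≤ C) {j : ℕ}
    (hx : ∀ m k, k ≤ β → |x₁ (m + k) j - x₂ (m + k) j| ≤ C ^ m * M)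
    (hy : |y₁ 0 j - y₂ 0 j| ≤ M) :
    ∀ i, |y₁ i j - y₂ i j| ≤ C ^ i * M
  | 0 => by simpa using hy
  | i + 1 => by
    rw [h₁.y_succ, h₂.y_succ, pow_succ', mul_assoc]
    exact abs_sub_cons_le hφ hcC hC (abs_sub_y_le h₁ h₂ hφ hcC hC hx hy i)
      fun k => hx i k (Nat.le_of_lt_succ k.isLt)

lemma abs_sub_x_succ_le (h₁ : IsStateDynamics_s8 ψ φ x₁ y₁) (h₂ : IsStateDynamics_s8 ψ φ x₂ y₂)
    (hψ : ∀ v w, |ψ v - ψ w| ≤ c * dist v w) (hcC : c ≤ C) (hC : 0 ≤ C) {j : ℕ}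
    (hx : ∀ m k, k ≤ α → |x₁ (m + k) j - x₂ (m + k) j| ≤ C ^ m * M)
    (hy : ∀ i, |y₁ i j - y₂ i j| ≤ C ^ i * M) (i : ℕ) :
    |x₁ i (j + 1) - x₂ i (j + 1)| ≤ C ^ (i + 1) * M := by
  rw [h₁.x_succ, h₂.x_succ, pow_succ', mul_assoc]
  exact abs_sub_cons_le hψ hcC hC (hy i) fun k => hx i k (Nat.le_of_lt_succ k.isLt)

lemma abs_sub_row_succ_le (h₁ : IsStateDynamics_s8 ψ φ x₁ y₁) (h₂ : IsStateDynamics_s8 ψ φ x₂ y₂)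
    (hψ : ∀ v w, |ψ v - ψ w| ≤ c * dist v w) (hφ : ∀ v w, |φ v - φ w| ≤ c * dist v w)
    (hcC : c ≤ C) (hC : 0 ≤ C) {j : ℕ}
    (hx : ∀ m k, k ≤ max α β → |x₁ (m + k) j - x₂ (m + k) j| ≤ C ^ m * M)
    (hy : |y₁ 0 j - y₂ 0 j| ≤ M) :
    (∀ i, |y₁ i j - y₂ i j| ≤ C ^ i * M) ∧ ∀ i, |x₁ i (j + 1) - x₂ i (j + 1)| ≤ C ^ (i + 1) * M := by
  have hyj := abs_sub_y_le h₁ h₂ hφ hcC hC (fun m k hk => hx m k (hk.trans (le_max_right _ _))) hy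
  exact ⟨hyj, abs_sub_x_succ_le h₁ h₂ hψ hcC hC
    (fun m k hk => hx m k (hk.trans (le_max_left _ _))) hyj⟩

lemma abs_sub_x_le (h₁ : IsStateDynamics_s8 ψ φ x₁ y₁) (h₂ : IsStateDynamics_s8 ψ φ x₂ y₂)
    (hψ : ∀ v w, |ψ v - ψ w| ≤ c * dist v w) (hφ : ∀ v w, |φ v - φ w| ≤ c * dist v w)
    (hcC : c ≤ C) (hC : 1 ≤ C) {I : ℝ}
    (hx₀ : ∀ i, |x₁ i 0 - x₂ i 0| ≤ I) (hy₀ : ∀ j, |y₁ 0 j - y₂ 0 j| ≤ I) :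
    ∀ j m k, k ≤ max α β →
      |x₁ (m + k) j - x₂ (m + k) j| ≤ C ^ m * (C ^ (j * (max α β + 1)) * I)
  | 0, m, k, _ => by
    have hI : 0 ≤ I := (abs_nonneg _).trans (hx₀ 0)
    simpa using (hx₀ (m + k)).trans (le_mul_of_one_le_left hI (one_le_pow₀ hC))
  | j + 1, m, k, hk => by
    have hI : 0 ≤ I := (abs_nonneg _).trans (hx₀ 0)
    set M := C ^ (j * (max α β + 1)) * I
    have hM : 0 ≤ M := mul_nonneg (by positivity) hI
    have hrow := abs_sub_row_succ_le h₁ h₂ hψ hφ hcC (by positivity)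
      (abs_sub_x_le h₁ h₂ hψ hφ hcC hC hx₀ hy₀ j)
      ((hy₀ j).trans (le_mul_of_one_le_left hI (one_le_pow₀ hC)))
    calc |x₁ (m + k) (j + 1) - x₂ (m + k) (j + 1)| ≤ C ^ (m + k + 1) * M := hrow.2 _
      _ ≤ C ^ (m + (max α β + 1)) * M :=
          mul_le_mul_of_nonneg_right (pow_le_pow_right₀ hC (by omega)) hM
      _ = C ^ m * (C ^ ((j + 1) * (max α β + 1)) * I) := by ring

end IsStateDynamics_s8

theorem statement8_general (α β : ℕ) (c : ℝ)
    (ψ : (Fin (α + 2) → ℝ) → ℝ) (φ : (Fin (β + 2) → ℝ) → ℝ)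
    (hψ : ∀ v w : Fin (α + 2) → ℝ, |ψ v - ψ w| ≤ c * dist v w)
    (hφ : ∀ v w : Fin (β + 2) → ℝ, |φ v - φ w| ≤ c * dist v w)
    (x01 y01 x02 y02 : ℕ → ℝ) (x1 y1 x2 y2 : ℕ → ℕ → ℝ)
    (hx01 : ∀ i, x1 i 0 = x01 i) (hy01 : ∀ j, y1 0 j = y01 j)
    (hx1 : ∀ i j, x1 i (j + 1) = ψ (Fin.cons (y1 i j) (fun k : Fin (α + 1) => x1 (i + (k : ℕ)) j)))
    (hy1 : ∀ i j, y1 (i + 1) j = φ (Fin.cons (y1 i j) (fun k : Fin (β + 1) => x1 (i + (k : ℕ)) j)))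
    (hx02 : ∀ i, x2 i 0 = x02 i) (hy02 : ∀ j, y2 0 j = y02 j)
    (hx2 : ∀ i j, x2 i (j + 1) = ψ (Fin.cons (y2 i j) (fun k : Fin (α + 1) => x2 (i + (k : ℕ)) j)))
    (hy2 : ∀ i j, y2 (i + 1) j = φ (Fin.cons (y2 i j) (fun k : Fin (β + 1) => x2 (i + (k : ℕ)) j)))
    (I : ℝ)
    (hIx : ∀ i, |x01 i - x02 i| ≤ I) (hIy : ∀ j, |y01 j - y02 j| ≤ I) :
    ∀ i j : ℕ,
      |x1 i (j + 1) - x2 i (j + 1)| ≤ (max c 1) ^ (i + 1 + j * (max α β + 1)) * I ∧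
      |y1 (i + 1) j - y2 (i + 1) j| ≤ (max c 1) ^ (i + 1 + j * (max α β + 1)) * I := by
  intro i j
  have h₁ : IsStateDynamics_s8 ψ φ x1 y1 := ⟨hx1, hy1⟩
  have h₂ : IsStateDynamics_s8 ψ φ x2 y2 := ⟨hx2, hy2⟩
  have hcC : c ≤ max c 1 := le_max_left c 1
  have hC : 1 ≤ max c 1 := le_max_right c 1
  have hx₀ : ∀ i, |x1 i 0 - x2 i 0| ≤ I := fun i => by rw [hx01, hx02]; exact hIx i
  have hy₀ : ∀ j, |y1 0 j - y2 0 j| ≤ I := fun j => by rw [hy01, hy02]; exact hIy j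
  have hI : 0 ≤ I := (abs_nonneg _).trans (hx₀ 0)
  obtain ⟨hy, hx⟩ := h₁.abs_sub_row_succ_le h₂ hψ hφ hcC (by positivity)
    (h₁.abs_sub_x_le h₂ hψ hφ hcC hC hx₀ hy₀ j)
    ((hy₀ j).trans (le_mul_of_one_le_left hI (one_le_pow₀ hC)))
  rw [pow_add, mul_assoc]
  exact ⟨hx i, hy (i + 1)⟩

/-- initial value dependence for the state dynamics of a `c`-Lipschitz
pair `(ψ, φ)`: if the initial data differ by at most `I`, then the orbits differ by
at most `c̃^{i+1+j(γ+1)} · I`, where `γ = max α β` and `c̃ = max c 1`. -/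
theorem statement8 (α β : ℕ) (c : ℝ) (hc : 0 ≤ c)
    (ψ : (Fin (α + 2) → ℝ) → ℝ) (φ : (Fin (β + 2) → ℝ) → ℝ)
    (hψ : ∀ v w : Fin (α + 2) → ℝ, |ψ v - ψ w| ≤ c * dist v w)
    (hφ : ∀ v w : Fin (β + 2) → ℝ, |φ v - φ w| ≤ c * dist v w)
    (x01 y01 x02 y02 : ℕ → ℝ) (x1 y1 x2 y2 : ℕ → ℕ → ℝ)
    (hx01 : ∀ i, x1 i 0 = x01 i) (hy01 : ∀ j, y1 0 j = y01 j)
    (hx1 : ∀ i j, x1 i (j + 1) = ψ (Fin.cons (y1 i j) (fun k : Fin (α + 1) => x1 (i + (k : ℕ)) j)))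
    (hy1 : ∀ i j, y1 (i + 1) j = φ (Fin.cons (y1 i j) (fun k : Fin (β + 1) => x1 (i + (k : ℕ)) j)))
    (hx02 : ∀ i, x2 i 0 = x02 i) (hy02 : ∀ j, y2 0 j = y02 j)
    (hx2 : ∀ i j, x2 i (j + 1) = ψ (Fin.cons (y2 i j) (fun k : Fin (α + 1) => x2 (i + (k : ℕ)) j)))
    (hy2 : ∀ i j, y2 (i + 1) j = φ (Fin.cons (y2 i j) (fun k : Fin (β + 1) => x2 (i + (k : ℕ)) j)))
    (I : ℝ) (hI : 0 ≤ I)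
    (hIx : ∀ i, |x01 i - x02 i| ≤ I) (hIy : ∀ j, |y01 j - y02 j| ≤ I) :
    ∀ i j : ℕ,
      |x1 i (j + 1) - x2 i (j + 1)| ≤ (max c 1) ^ (i + 1 + j * (max α β + 1)) * I ∧
      |y1 (i + 1) j - y2 (i + 1) j| ≤ (max c 1) ^ (i + 1 + j * (max α β + 1)) * I :=
  statement8_general α β c ψ φ hψ hφ x01 y01 x02 y02 x1 y1 x2 y2 hx01 hy01 hx1 hy1 hx02 hy02 hx2 hy2
    I hIx hIy
end

section
/- Let ψ : ℝ^{α+2} → ℝ and φ : ℝ^{β+2} → ℝ be c-Lipschitz for the sup metric, t > 1, M ≥ 1. For l = 1, 2 let f^l be (t,M)-close to ψ and g^l be (t,M)-close to φ, and let (z_l(i,j), w_l(i,j)) be the rational state system for (f^l, g^l) with positive initial data (z_i(l))_i, (w^j(l))_j. Suppose ρ ≥ 1 satisfies z_i(1)/z_i(2) ≤ ρ, z_i(2)/z_i(1) ≤ ρ, w^j(1)/w^j(2) ≤ ρ and w^j(2)/w^j(1) ≤ ρ for all i, j. Then for all i, j ≥ 0: max(z_1(i,j+1)/z_2(i,j+1),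 z_2(i,j+1)/z_1(i,j+1), w_1(i+1,j)/w_2(i+1,j), w_2(i+1,j)/w_1(i+1,j)) ≤ M^{2·P_{i+j(γ+1)}(c)} · ρ^{c̃^{i+1+j(γ+1)}}. -/
/-!
Pass to `log_t` coordinates. There each defining function of the two systems lies within
`m = log_t M` of the same `c`-Lipschitz map, so one step of the recursion turns input discrepancies
at most `A` into an output discrepancy at most `2 m + c A`. A cell `(i, j)` is reached from the
initial data in `i + j (γ + 1)` such steps (each row needs the `γ` cells to its right), and
iterating `A ↦ 2 m + c A` from `log_t ρ` stays below `2 m P_{n-1}(c) + c̃ ^ n log_t ρ`.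
-/

open Real Finset

def stateInput (n : ℕ) (z w : ℕ → ℕ → ℝ) (i j : ℕ) : Fin (n + 2) → ℝ :=
  Fin.cons (w i j) fun k : Fin (n + 1) => z (i + (k : ℕ)) j

structure IsStateSystem {α β : ℕ} (f : (Fin (α + 2) → ℝ) → ℝ) (g : (Fin (β + 2) → ℝ) → ℝ)
    (z w : ℕ → ℕ → ℝ) : Prop where
  z_succ : ∀ i j, z i (j + 1) = f (stateInput α z w i j)
  w_succ : ∀ i j, w (i + 1) j = g (stateInput β z w i j)

/-- `F` is `(t, M)`-close to `Ψ` with `m = log_t M`. -/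
def IsLogClose {n : ℕ} (t m : ℝ) (F Ψ : (Fin n → ℝ) → ℝ) : Prop :=
  ∀ v : Fin n → ℝ, (∀ k, 0 < v k) → |logb t (F v) - Ψ fun k => logb t (v k)| ≤ m

section StateInput

variable {n : ℕ} {i j : ℕ}

lemma stateInput_pos {z w : ℕ → ℕ → ℝ} (hw : 0 < w i j) (hz : ∀ k, 0 < z (i + k) j) :
    ∀ k, 0 < stateInput n z w i j k :=
  Fin.cases hw fun k => hz k

lemma abs_logb_stateInput_sub_le {t A : ℝ} {z₁ z₂ w₁ w₂ : ℕ → ℕ → ℝ}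
    (hw : |logb t (w₁ i j) - logb t (w₂ i j)| ≤ A)
    (hz : ∀ k ≤ n, |logb t (z₁ (i + k) j) - logb t (z₂ (i + k) j)| ≤ A) :
    ∀ k, |logb t (stateInput n z₁ w₁ i j k) - logb t (stateInput n z₂ w₂ i j k)| ≤ A :=
  Fin.cases hw fun k => hz k (Nat.lt_succ_iff.mp k.isLt)

end StateInput

theorem IsStateSystem.pos {α β : ℕ} {f : (Fin (α + 2) → ℝ) → ℝ} {g : (Fin (β + 2) → ℝ) → ℝ}
    {z w : ℕ → ℕ → ℝ} (hs : IsStateSystem f g z w)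
    (hf : ∀ v, (∀ k, 0 < v k) → 0 < f v) (hg : ∀ v, (∀ k, 0 < v k) → 0 < g v)
    (hz : ∀ i, 0 < z i 0) (hw : ∀ j, 0 < w 0 j) :
    ∀ i j, 0 < z i j ∧ 0 < w i j := by
  have w_row : ∀ j, (∀ i, 0 < z i j) → ∀ i, 0 < w i j := fun j hzj i => by
    induction i with
    | zero => exact hw j
    | succ i ih => rw [hs.w_succ]; exact hg _ (stateInput_pos ih fun _ => hzj _)
  have z_row : ∀ j i, 0 < z i j := fun j => by
    induction j with
    | zero => exact hz
    | succ j ih => intro i; rw [hs.z_succ]; exact hf _ (stateInput_pos (w_row j ih i) fun _ => ih _)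
  exact fun i j => ⟨z_row j i, w_row j (z_row j) i⟩

theorem IsLogClose.abs_logb_sub_le {n : ℕ} {t m c A : ℝ} {F₁ F₂ Ψ : (Fin n → ℝ) → ℝ}
    (h₁ : IsLogClose t m F₁ Ψ) (h₂ : IsLogClose t m F₂ Ψ)
    (hΨ : ∀ v w, |Ψ v - Ψ w| ≤ c * dist v w) (hc : 0 ≤ c) {v₁ v₂ : Fin n → ℝ}
    (hv₁ : ∀ k, 0 < v₁ k) (hv₂ : ∀ k, 0 < v₂ k) (hA : 0 ≤ A)
    (hv : ∀ k, |logb t (v₁ k) - logb t (v₂ k)| ≤ A) :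
    |logb t (F₁ v₁) - logb t (F₂ v₂)| ≤ 2 * m + c * A := by
  set u₁ : Fin n → ℝ := fun k => logb t (v₁ k)
  set u₂ : Fin n → ℝ := fun k => logb t (v₂ k)
  have hu : dist u₁ u₂ ≤ A := (dist_pi_le_iff hA).2 fun k => (Real.dist_eq _ _).trans_le (hv k)
  calc |logb t (F₁ v₁) - logb t (F₂ v₂)|
      ≤ |logb t (F₁ v₁) - Ψ u₁| + |Ψ u₁ - Ψ u₂| + |logb t (F₂ v₂) - Ψ u₂| := by
        rw [abs_sub_comm (logb t (F₂ v₂))]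
        exact (abs_sub_le _ (Ψ u₂) _).trans (add_le_add_left (abs_sub_le _ _ _) _)
    _ ≤ m + c * A + m := by gcongr; exacts [h₁ v₁ hv₁, (hΨ u₁ u₂).trans (by gcongr), h₂ v₂ hv₂]
    _ = 2 * m + c * A := by ring

theorem grid_bound_of_step {α β γ : ℕ} (hα : α ≤ γ) (hβ : β ≤ γ) {Dz Dw : ℕ → ℕ → ℝ}
    {B : ℕ → ℝ} (hB : Monotone B) (hz₀ : ∀ i, Dz i 0 ≤ B 0) (hw₀ : ∀ j, Dw 0 j ≤ B 0)
    (hz : ∀ i j n, Dw i j ≤ B n → (∀ k ≤ α, Dz (i + k) j ≤ B n) → Dz i (j + 1) ≤ B (n + 1))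
    (hw : ∀ i j n, Dw i j ≤ B n → (∀ k ≤ β, Dz (i + k) j ≤ B n) → Dw (i + 1) j ≤ B (n + 1)) :
    (∀ i j, Dz i (j + 1) ≤ B (i + j * (γ + 1) + 1)) ∧ ∀ i j, Dw i j ≤ B (i + j * (γ + 1)) := by
  have w_row : ∀ j, (∀ i, ∀ k ≤ γ, Dz (i + k) j ≤ B (i + j * (γ + 1))) →
      ∀ i, Dw i j ≤ B (i + j * (γ + 1)) := fun j hzj i => by
    induction i with
    | zero => exact (hw₀ j).trans (hB (Nat.zero_le _))
    | succ i ih =>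
      rw [Nat.add_right_comm]
      exact hw i j _ ih fun k hk => hzj i k (hk.trans hβ)
  have z_row : ∀ j i, ∀ k ≤ γ, Dz (i + k) j ≤ B (i + j * (γ + 1)) := fun j => by
    induction j with
    | zero => exact fun i k _ => (hz₀ _).trans (hB (Nat.zero_le _))
    | succ j ih =>
      intro i k hk
      refine (hz (i + k) j _ (w_row j ih (i + k)) fun l hl => ih (i + k) l (hl.trans hα)).trans
        (hB ?_)
      rw [Nat.succ_mul]
      omega
  exact ⟨fun i j => hz i j _ (w_row j (z_row j) i) fun k hk => z_row j i k (hk.trans hα),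
    fun i j => w_row j (z_row j) i⟩

theorem IsStateSystem.abs_logb_sub_le {α β γ : ℕ} (hα : α ≤ γ) (hβ : β ≤ γ) {t m c : ℝ}
    {ψ f₁ f₂ : (Fin (α + 2) → ℝ) → ℝ} {φ g₁ g₂ : (Fin (β + 2) → ℝ) → ℝ}
    {z₁ z₂ w₁ w₂ : ℕ → ℕ → ℝ} (hs₁ : IsStateSystem f₁ g₁ z₁ w₁)
    (hs₂ : IsStateSystem f₂ g₂ z₂ w₂) (pos₁ : ∀ i j, 0 < z₁ i j ∧ 0 < w₁ i j)
    (pos₂ : ∀ i j, 0 < z₂ i j ∧ 0 < w₂ i j) (hf₁ : IsLogClose t m f₁ ψ)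
    (hf₂ : IsLogClose t m f₂ ψ) (hg₁ : IsLogClose t m g₁ φ) (hg₂ : IsLogClose t m g₂ φ)
    (hψ : ∀ v w, |ψ v - ψ w| ≤ c * dist v w) (hφ : ∀ v w, |φ v - φ w| ≤ c * dist v w)
    (hc : 0 ≤ c) {B : ℕ → ℝ} (hB : Monotone B) (hB_succ : ∀ n, 2 * m + c * B n ≤ B (n + 1))
    (hz₀ : ∀ i, |logb t (z₁ i 0) - logb t (z₂ i 0)| ≤ B 0)
    (hw₀ : ∀ j, |logb t (w₁ 0 j) - logb t (w₂ 0 j)| ≤ B 0) :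
    (∀ i j, |logb t (z₁ i (j + 1)) - logb t (z₂ i (j + 1))| ≤ B (i + j * (γ + 1) + 1)) ∧
      ∀ i j, |logb t (w₁ i j) - logb t (w₂ i j)| ≤ B (i + j * (γ + 1)) := by
  refine grid_bound_of_step (Dz := fun i j => |logb t (z₁ i j) - logb t (z₂ i j)|)
    (Dw := fun i j => |logb t (w₁ i j) - logb t (w₂ i j)|) hα hβ hB hz₀ hw₀
    (fun i j n hw hz => ?_) (fun i j n hw hz => ?_)
  · rw [hs₁.z_succ, hs₂.z_succ]
    refine (hf₁.abs_logb_sub_le hf₂ hψ hc ?_ ?_ ((abs_nonneg _).trans hw)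
      (abs_logb_stateInput_sub_le hw hz)).trans (hB_succ n)
    exacts [stateInput_pos (pos₁ i j).2 fun _ => (pos₁ _ j).1,
      stateInput_pos (pos₂ i j).2 fun _ => (pos₂ _ j).1]
  · rw [hs₁.w_succ, hs₂.w_succ]
    refine (hg₁.abs_logb_sub_le hg₂ hφ hc ?_ ?_ ((abs_nonneg _).trans hw)
      (abs_logb_stateInput_sub_le hw hz)).trans (hB_succ n)
    exacts [stateInput_pos (pos₁ i j).2 fun _ => (pos₁ _ j).1,
      stateInput_pos (pos₂ i j).2 fun _ => (pos₂ _ j).1]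

/-- `log_t (M ^ (2 P_{n-1}(c)) * ρ ^ (c̃ ^ n))` for `m = log_t M`, `r = log_t ρ`. -/
def logBound (c m r : ℝ) (n : ℕ) : ℝ :=
  2 * m * ∑ k ∈ range n, c ^ k + max c 1 ^ n * r

section LogBound

variable {c m r : ℝ}

lemma logBound_zero : logBound c m r 0 = r := by simp [logBound]

lemma logBound_monotone (hc : 0 ≤ c) (hm : 0 ≤ m) (hr : 0 ≤ r) : Monotone (logBound c m r) := by
  refine monotone_nat_of_le_succ fun n => ?_
  have hsum : ∑ k ∈ range n, c ^ k ≤ ∑ k ∈ range (n + 1), c ^ k := by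
    rw [sum_range_succ]; exact le_add_of_nonneg_right (pow_nonneg hc n)
  unfold logBound
  gcongr
  · exact le_max_right c 1
  · omega

lemma two_mul_add_mul_logBound_le (hr : 0 ≤ r) (n : ℕ) :
    2 * m + c * logBound c m r n ≤ logBound c m r (n + 1) := by
  have hpow : c * max c 1 ^ n ≤ max c 1 ^ (n + 1) := by
    rw [pow_succ']; gcongr; exact le_max_left c 1
  have := mul_le_mul_of_nonneg_right hpow hr
  unfold logBound
  rw [geom_sum_succ]
  linarith

lemma rpow_logBound {t M ρ : ℝ} (ht : 0 < t) (ht₁ : t ≠ 1) (hM : 0 < M) (hρ : 0 < ρ) (n : ℕ) :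
    t ^ logBound c (logb t M) (logb t ρ) n
      = M ^ (2 * ∑ k ∈ range n, c ^ k) * ρ ^ (max c 1 ^ n) := by
  rw [logBound, rpow_add ht, mul_assoc, mul_left_comm, mul_comm (max c 1 ^ n), rpow_mul ht.le,
    rpow_mul ht.le, rpow_logb ht ht₁ hM, rpow_logb ht ht₁ hρ]

end LogBound

section LogRatio

variable {t a b : ℝ}

lemma abs_logb_sub_le_logb_of_div_le {ρ : ℝ} (ht : 1 < t) (ha : 0 < a) (hb : 0 < b)
    (hab : a / b ≤ ρ) (hba : b / a ≤ ρ) : |logb t a - logb t b| ≤ logb t ρ := by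
  rw [abs_sub_le_iff, ← logb_div ha.ne' hb.ne', ← logb_div hb.ne' ha.ne']
  exact ⟨logb_le_logb_of_le ht (div_pos ha hb) hab, logb_le_logb_of_le ht (div_pos hb ha) hba⟩

lemma max_div_le_rpow_of_abs_logb_sub_le {D : ℝ} (ht : 1 < t) (ha : 0 < a) (hb : 0 < b)
    (h : |logb t a - logb t b| ≤ D) : max (a / b) (b / a) ≤ t ^ D := by
  rw [abs_sub_le_iff, ← logb_div ha.ne' hb.ne', ← logb_div hb.ne' ha.ne'] at h
  exact max_le ((logb_le_iff_le_rpow ht (div_pos ha hb)).1 h.1)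
    ((logb_le_iff_le_rpow ht (div_pos hb ha)).1 h.2)

end LogRatio

/-- comparison of two rational state systems whose defining functions are
`(t,M)`-close to the same `c`-Lipschitz pair `(ψ, φ)` (e.g. tropically equivalent
relatively elementary functions), with initial ratio at most `ρ`.
Here `γ = max α β`, `P_n(c) = ∑_{k=0}^n c^k`, `c̃ = max c 1`. -/
theorem statement9 (α β : ℕ) (c t M : ℝ) (hc : 0 ≤ c) (ht : 1 < t) (hM : 1 ≤ M)
    (ψ : (Fin (α + 2) → ℝ) → ℝ) (φ : (Fin (β + 2) → ℝ) → ℝ)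
    (hψ : ∀ v w : Fin (α + 2) → ℝ, |ψ v - ψ w| ≤ c * dist v w)
    (hφ : ∀ v w : Fin (β + 2) → ℝ, |φ v - φ w| ≤ c * dist v w)
    (f1 f2 : (Fin (α + 2) → ℝ) → ℝ) (g1 g2 : (Fin (β + 2) → ℝ) → ℝ)
    (hf1pos : ∀ v : Fin (α + 2) → ℝ, (∀ k, 0 < v k) → 0 < f1 v)
    (hf2pos : ∀ v : Fin (α + 2) → ℝ, (∀ k, 0 < v k) → 0 < f2 v)
    (hg1pos : ∀ v : Fin (β + 2) → ℝ, (∀ k, 0 < v k) → 0 < g1 v)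
    (hg2pos : ∀ v : Fin (β + 2) → ℝ, (∀ k, 0 < v k) → 0 < g2 v)
    (hf1 : ∀ v : Fin (α + 2) → ℝ, (∀ k, 0 < v k) →
      |Real.log (f1 v) / Real.log t - ψ (fun k => Real.log (v k) / Real.log t)|
        ≤ Real.log M / Real.log t)
    (hf2 : ∀ v : Fin (α + 2) → ℝ, (∀ k, 0 < v k) →
      |Real.log (f2 v) / Real.log t - ψ (fun k => Real.log (v k) / Real.log t)|
        ≤ Real.log M / Real.log t)
    (hg1 : ∀ v : Fin (β + 2) → ℝ, (∀ k, 0 < v k) →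
      |Real.log (g1 v) / Real.log t - φ (fun k => Real.log (v k) / Real.log t)|
        ≤ Real.log M / Real.log t)
    (hg2 : ∀ v : Fin (β + 2) → ℝ, (∀ k, 0 < v k) →
      |Real.log (g2 v) / Real.log t - φ (fun k => Real.log (v k) / Real.log t)|
        ≤ Real.log M / Real.log t)
    (z1 z2 w1 w2 : ℕ → ℕ → ℝ)
    (hz1pos : ∀ i, 0 < z1 i 0) (hz2pos : ∀ i, 0 < z2 i 0)
    (hw1pos : ∀ j, 0 < w1 0 j) (hw2pos : ∀ j, 0 < w2 0 j)
    (hz1 : ∀ i j, z1 i (j + 1) = f1 (Fin.cons (w1 i j) (fun k : Fin (α + 1) => z1 (i + (k : ℕ)) j)))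
    (hw1 : ∀ i j, w1 (i + 1) j = g1 (Fin.cons (w1 i j) (fun k : Fin (β + 1) => z1 (i + (k : ℕ)) j)))
    (hz2 : ∀ i j, z2 i (j + 1) = f2 (Fin.cons (w2 i j) (fun k : Fin (α + 1) => z2 (i + (k : ℕ)) j)))
    (hw2 : ∀ i j, w2 (i + 1) j = g2 (Fin.cons (w2 i j) (fun k : Fin (β + 1) => z2 (i + (k : ℕ)) j)))
    (ρ : ℝ) (hρ : 1 ≤ ρ)
    (hρz : ∀ i, z1 i 0 / z2 i 0 ≤ ρ ∧ z2 i 0 / z1 i 0 ≤ ρ)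
    (hρw : ∀ j, w1 0 j / w2 0 j ≤ ρ ∧ w2 0 j / w1 0 j ≤ ρ) :
    ∀ i j : ℕ,
      max (max (z1 i (j + 1) / z2 i (j + 1)) (z2 i (j + 1) / z1 i (j + 1)))
          (max (w1 (i + 1) j / w2 (i + 1) j) (w2 (i + 1) j / w1 (i + 1) j))
        ≤ M ^ (2 * ∑ k ∈ Finset.range (i + j * (max α β + 1) + 1), c ^ k)
          * ρ ^ ((max c 1) ^ (i + 1 + j * (max α β + 1))) := by
  intro i j
  have hM₀ : 0 < M := zero_lt_one.trans_le hM
  have hρ₀ : 0 < ρ := zero_lt_one.trans_le hρ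
  have pos₁ := IsStateSystem.pos ⟨hz1, hw1⟩ hf1pos hg1pos hz1pos hw1pos
  have pos₂ := IsStateSystem.pos ⟨hz2, hw2⟩ hf2pos hg2pos hz2pos hw2pos
  obtain ⟨hZ, hW⟩ := IsStateSystem.abs_logb_sub_le (le_max_left α β) (le_max_right α β)
    ⟨hz1, hw1⟩ ⟨hz2, hw2⟩ pos₁ pos₂ hf1 hf2 hg1 hg2 hψ hφ hc
    (logBound_monotone hc (logb_nonneg ht hM) (logb_nonneg ht hρ))
    (two_mul_add_mul_logBound_le (logb_nonneg ht hρ))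
    (fun i => logBound_zero.symm ▸ abs_logb_sub_le_logb_of_div_le ht (pos₁ i 0).1 (pos₂ i 0).1
      (hρz i).1 (hρz i).2)
    (fun j => logBound_zero.symm ▸ abs_logb_sub_le_logb_of_div_le ht (pos₁ 0 j).2 (pos₂ 0 j).2
      (hρw j).1 (hρw j).2)
  have hn : i + 1 + j * (max α β + 1) = i + j * (max α β + 1) + 1 := by ring
  rw [hn, ← rpow_logBound (zero_lt_one.trans ht) ht.ne' hM₀ hρ₀]
  exact max_le (max_div_le_rpow_of_abs_logb_sub_le ht (pos₁ i _).1 (pos₂ i _).1 (hZ i j))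
    (max_div_le_rpow_of_abs_logb_sub_le ht (pos₁ _ j).2 (pos₂ _ j).2 (hn ▸ hW (i + 1) j))
end

section
/- For S = {0,1} and q ∈ {0,1}, define F_q : S^ℕ → S^ℕ as follows: given k : ℕ → S, set q_i = (q + i) mod 2 and (F_q k)(i) = 1 − k(i) if q_i = 1, while if q_i = 0 then (F_q k)(i) = 1 − k(i) when k(i+1) = 0 and (F_q k)(i) = k(i) when k(i+1) = 1. Then F_0 and F_1 are bijections of S^ℕ. (This is the state dynamics of a non-Mealy automaton with output depending on two consecutive letters, which nevertheless acts by isomorphisms on the boundary of the binary tree.) -/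
/-!
At a position `i` with `q + i = 1` the map `F_q` just flips the letter, so the letter after
each position with `q + i = 0` is recovered from the image. Knowing `k (i + 1)`, the letter
`k i` is then recovered from `F_q k i` as well. This gives an explicit two-sided inverse:
`k i = 1 - m i` when `q + i = 1`, and `k i = m i + m (i + 1)` when `q + i = 0`.
-/

/-- The state dynamics `A_q` of the non-Mealy automaton with state set `Q = {0,1}`,
output `ψ(1, s, s') = 1 − s`, `ψ(0, s, s') = 1 − s` if `s' = 0` and `s` if `s' = 1`,
and transition `φ(q, s, s') = 1 − q` (so that `q_i = (q + i) mod 2`). -/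
def aleshinLikeMap (q : Fin 2) (k : ℕ → Fin 2) : ℕ → Fin 2 :=
  fun i =>
    if q + (Fin.ofNat 2 i : Fin 2) = 1 then 1 - k i
    else if k (i + 1) = 0 then 1 - k i else k i

def aleshinLikeInv (q : Fin 2) (m : ℕ → Fin 2) : ℕ → Fin 2 :=
  fun i =>
    if q + (Fin.ofNat 2 i : Fin 2) = 1 then 1 - m i
    else if m (i + 1) = 1 then 1 - m i else m i

theorem Fin.ofNat_add_one (n : ℕ) [NeZero n] (i : ℕ) :
    Fin.ofNat n (i + 1) = Fin.ofNat n i + 1 := by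
  ext; simp [Fin.val_add, Nat.add_mod]

/-! In both directions the value at `i` depends only on `q + i` and the letters at
`i`, `i + 1`, `i + 2`, so each identity is a finite check over `Fin 2`. -/

theorem aleshinLikeInv_leftInverse (q : Fin 2) :
    Function.LeftInverse (aleshinLikeInv q) (aleshinLikeMap q) := by
  intro k
  funext i
  simp only [aleshinLikeInv, aleshinLikeMap, Fin.ofNat_add_one, ← add_assoc]
  generalize q + Fin.ofNat 2 i = a, k i = x, k (i + 1) = y, k (i + 1 + 1) = z
  decide +revert

theorem aleshinLikeInv_rightInverse (q : Fin 2) :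
    Function.RightInverse (aleshinLikeInv q) (aleshinLikeMap q) := by
  intro m
  funext i
  simp only [aleshinLikeInv, aleshinLikeMap, Fin.ofNat_add_one, ← add_assoc]
  generalize q + Fin.ofNat 2 i = a, m i = x, m (i + 1) = y, m (i + 1 + 1) = z
  decide +revert

theorem aleshinLikeMap_bijective (q : Fin 2) : Function.Bijective (aleshinLikeMap q) :=
  ⟨(aleshinLikeInv_leftInverse q).injective, (aleshinLikeInv_rightInverse q).surjective⟩

/-- `F_0` and `F_1` are bijections of `S^ℕ = (ℕ → Fin 2)`. -/
theorem statement13 :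
    Function.Bijective (aleshinLikeMap 0) ∧ Function.Bijective (aleshinLikeMap 1) :=
  ⟨aleshinLikeMap_bijective 0, aleshinLikeMap_bijective 1⟩
end

section
/- Let (ψ, φ) extend an automaton on finite sets Q, S ⊂ ℝ and be (δ, μ)-stable with 0 < δ < 1 and 0 ≤ μ < 1. Let k ∈ S^ℕ, q ∈ Q^ℕ and x, y ∈ ℝ^ℕ satisfy |x_i − k_i| < δ and |y^j − q^j| < δ for all i, j. Let (x(i,j), y(i,j)) be the state dynamics for (ψ, φ) with initial data (x_i), (y^j), and (k(i,j), q(i,j)) the state dynamics for (ψ, φ) with initial data (k_i), (q^j). Then |x(i,j) − k(i,j)| < δ and |y(i,j) − q(i,j)| < δ for all i, j ≥ 0. -/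
/-! Induct on the time `j` and, within time `j`, on the position `i`. Each new entry is obtained by
applying `ψ` or `φ` to a window whose automaton version lies in `Q × Sⁿ` and whose real version is
within sup-distance `δ` of it; stability there, with `μ < 1`, keeps the new error below `δ`, and
the automaton property keeps the automaton orbit in `Q × Sⁿ` for the next step. -/

theorem Fin.dist_cons_lt {X : Type*} [PseudoMetricSpace X] {n : ℕ} {δ : ℝ} (hδ : 0 < δ)
    {a b : X} {s t : Fin n → X} (hab : dist a b < δ) (hst : ∀ k, dist (s k) (t k) < δ) :
    dist (Fin.cons a s : Fin (n + 1) → X) (Fin.cons b t) < δ :=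
  (dist_pi_lt_iff hδ).2 <| Fin.cases hab hst

theorem stable_extension_step {n : ℕ} {Q S T : Set ℝ} {δ μ : ℝ} {f : (Fin (n + 2) → ℝ) → ℝ}
    (hδ : 0 < δ) (hμ : μ ≤ 1)
    (hext : ∀ (q : ℝ) (s : Fin (n + 1) → ℝ), q ∈ Q → (∀ k, s k ∈ S) → f (Fin.cons q s) ∈ T)
    (hstab : ∀ (q : ℝ) (s : Fin (n + 1) → ℝ), q ∈ Q → (∀ k, s k ∈ S) →
      ∀ v : Fin (n + 2) → ℝ, dist v (Fin.cons q s) < δ →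
        |f v - f (Fin.cons q s)| ≤ μ * dist v (Fin.cons q s))
    {a b : ℝ} {s t : Fin (n + 1) → ℝ} (hb : b ∈ Q) (ht : ∀ k, t k ∈ S)
    (hab : |a - b| < δ) (hst : ∀ k, |s k - t k| < δ) :
    f (Fin.cons b t) ∈ T ∧ |f (Fin.cons a s) - f (Fin.cons b t)| < δ := by
  have hdist : dist (Fin.cons a s : Fin (n + 2) → ℝ) (Fin.cons b t) < δ :=
    Fin.dist_cons_lt hδ ((Real.dist_eq a b).trans_lt hab) fun k => (Real.dist_eq _ _).trans_lt (hst k)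
  exact ⟨hext b t hb ht,
    (hstab b t hb ht _ hdist).trans_lt ((mul_le_of_le_one_left dist_nonneg hμ).trans_lt hdist)⟩

theorem statement14_general (α β : ℕ) (Q S : Finset ℝ) (δ μ : ℝ)
    (hδ0 : 0 < δ) (hμ1 : μ < 1)
    (ψ : (Fin (α + 2) → ℝ) → ℝ) (φ : (Fin (β + 2) → ℝ) → ℝ)
    (hext1 : ∀ (q : ℝ) (s : Fin (α + 1) → ℝ), q ∈ Q → (∀ k, s k ∈ S) →
      ψ (Fin.cons q s) ∈ S)
    (hext2 : ∀ (q : ℝ) (s : Fin (β + 1) → ℝ), q ∈ Q → (∀ k, s k ∈ S) →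
      φ (Fin.cons q s) ∈ Q)
    (hstab1 : ∀ (q : ℝ) (s : Fin (α + 1) → ℝ), q ∈ Q → (∀ k, s k ∈ S) →
      ∀ v : Fin (α + 2) → ℝ, dist v (Fin.cons q s) < δ →
        |ψ v - ψ (Fin.cons q s)| ≤ μ * dist v (Fin.cons q s))
    (hstab2 : ∀ (q : ℝ) (s : Fin (β + 1) → ℝ), q ∈ Q → (∀ k, s k ∈ S) →
      ∀ v : Fin (β + 2) → ℝ, dist v (Fin.cons q s) < δ →
        |φ v - φ (Fin.cons q s)| ≤ μ * dist v (Fin.cons q s))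
    (k0 q0 : ℕ → ℝ) (hk0 : ∀ i, k0 i ∈ S) (hq0 : ∀ j, q0 j ∈ Q)
    (x0 y0 : ℕ → ℝ) (hx0 : ∀ i, |x0 i - k0 i| < δ) (hy0 : ∀ j, |y0 j - q0 j| < δ)
    (x y K Qd : ℕ → ℕ → ℝ)
    (hxinit : ∀ i, x i 0 = x0 i) (hyinit : ∀ j, y 0 j = y0 j)
    (hx : ∀ i j, x i (j + 1) = ψ (Fin.cons (y i j) (fun k : Fin (α + 1) => x (i + (k : ℕ)) j)))
    (hy : ∀ i j, y (i + 1) j = φ (Fin.cons (y i j) (fun k : Fin (β + 1) => x (i + (k : ℕ)) j)))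
    (hKinit : ∀ i, K i 0 = k0 i) (hQdinit : ∀ j, Qd 0 j = q0 j)
    (hK : ∀ i j, K i (j + 1) = ψ (Fin.cons (Qd i j) (fun k : Fin (α + 1) => K (i + (k : ℕ)) j)))
    (hQd : ∀ i j, Qd (i + 1) j = φ (Fin.cons (Qd i j) (fun k : Fin (β + 1) => K (i + (k : ℕ)) j))) :
    ∀ i j : ℕ, |x i j - K i j| < δ ∧ |y i j - Qd i j| < δ := by
  have y_close : ∀ j, (∀ i, K i j ∈ S ∧ |x i j - K i j| < δ) →
      ∀ i, Qd i j ∈ Q ∧ |y i j - Qd i j| < δ := by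
    intro j hcol i
    induction i with
    | zero => rw [hQdinit, hyinit]; exact ⟨hq0 j, hy0 j⟩
    | succ i ih =>
      rw [hy, hQd]
      exact stable_extension_step hδ0 hμ1.le hext2 hstab2 ih.1
        (fun _ => (hcol _).1) ih.2 (fun _ => (hcol _).2)
  have x_close : ∀ j i, K i j ∈ S ∧ |x i j - K i j| < δ := by
    intro j
    induction j with
    | zero => intro i; rw [hKinit, hxinit]; exact ⟨hk0 i, hx0 i⟩
    | succ j ih =>
      intro i
      obtain ⟨hQi, hyi⟩ := y_close j ih i
      rw [hx, hK]
      exact stable_extension_step hδ0 hμ1.le hext1 hstab1 hQi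
        (fun _ => (ih _).1) hyi (fun _ => (ih _).2)
  exact fun i j => ⟨(x_close j i).2, (y_close j (x_close j) i).2⟩

/-- a `(δ, μ)`-stable extension of an automaton keeps real orbits within
distance `δ` of automaton orbits, provided the initial data are within distance `δ`. -/
theorem statement14 (α β : ℕ) (Q S : Finset ℝ) (δ μ : ℝ)
    (hδ0 : 0 < δ) (hδ1 : δ < 1) (hμ0 : 0 ≤ μ) (hμ1 : μ < 1)
    (ψ : (Fin (α + 2) → ℝ) → ℝ) (φ : (Fin (β + 2) → ℝ) → ℝ)
    (hext1 : ∀ (q : ℝ) (s : Fin (α + 1) → ℝ), q ∈ Q → (∀ k, s k ∈ S) →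
      ψ (Fin.cons q s) ∈ S)
    (hext2 : ∀ (q : ℝ) (s : Fin (β + 1) → ℝ), q ∈ Q → (∀ k, s k ∈ S) →
      φ (Fin.cons q s) ∈ Q)
    (hstab1 : ∀ (q : ℝ) (s : Fin (α + 1) → ℝ), q ∈ Q → (∀ k, s k ∈ S) →
      ∀ v : Fin (α + 2) → ℝ, dist v (Fin.cons q s) < δ →
        |ψ v - ψ (Fin.cons q s)| ≤ μ * dist v (Fin.cons q s))
    (hstab2 : ∀ (q : ℝ) (s : Fin (β + 1) → ℝ), q ∈ Q → (∀ k, s k ∈ S) →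
      ∀ v : Fin (β + 2) → ℝ, dist v (Fin.cons q s) < δ →
        |φ v - φ (Fin.cons q s)| ≤ μ * dist v (Fin.cons q s))
    (k0 q0 : ℕ → ℝ) (hk0 : ∀ i, k0 i ∈ S) (hq0 : ∀ j, q0 j ∈ Q)
    (x0 y0 : ℕ → ℝ) (hx0 : ∀ i, |x0 i - k0 i| < δ) (hy0 : ∀ j, |y0 j - q0 j| < δ)
    (x y K Qd : ℕ → ℕ → ℝ)
    (hxinit : ∀ i, x i 0 = x0 i) (hyinit : ∀ j, y 0 j = y0 j)
    (hx : ∀ i j, x i (j + 1) = ψ (Fin.cons (y i j) (fun k : Fin (α + 1) => x (i + (k : ℕ)) j)))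
    (hy : ∀ i j, y (i + 1) j = φ (Fin.cons (y i j) (fun k : Fin (β + 1) => x (i + (k : ℕ)) j)))
    (hKinit : ∀ i, K i 0 = k0 i) (hQdinit : ∀ j, Qd 0 j = q0 j)
    (hK : ∀ i j, K i (j + 1) = ψ (Fin.cons (Qd i j) (fun k : Fin (α + 1) => K (i + (k : ℕ)) j)))
    (hQd : ∀ i j, Qd (i + 1) j = φ (Fin.cons (Qd i j) (fun k : Fin (β + 1) => K (i + (k : ℕ)) j))) :
    ∀ i j : ℕ, |x i j - K i j| < δ ∧ |y i j - Qd i j| < δ :=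
  statement14_general α β Q S δ μ hδ0 hμ1 ψ φ hext1 hext2 hstab1 hstab2 k0 q0 hk0 hq0 x0 y0 hx0 hy0
    x y K Qd hxinit hyinit hx hy hKinit hQdinit hK hQd
end

section
/- For l = 1, 2 let (ψ^l, φ^l) extend automata on the same finite sets Q, S ⊂ ℝ and be (δ, μ)-stable (0 < δ < 1, 0 ≤ μ < 1), and suppose that for some R ⊆ Q the induced state dynamics agree over R: for every q ∈ R and every k ∈ S^ℕ, the output sequences A^{(ψ¹,φ¹)}_q(k) and A^{(ψ²,φ²)}_q(k) coincide. Let t > 1, M ≥ 1 and C ≥ 1 satisfy M < C^{1−μ} and log_t C ≤ δ/2. For l = 1, 2 let f^l, g^l be positive functions that are (t,M)-close to ψ^l and φ^l respectively, and let (z_l(i,j), w_l(i,j)) be the rational state system for (f^l, g^l) with initial data satisfying C^{−1}·t^{k_i} ≤ z_i(l) ≤ C·t^{k_i} and C^{−1}·t^{q^j} ≤ w^j(l) ≤ C·t^{q^j} for some fixed k ∈ S^ℕ and q ∈ R^ℕ. Then max(z_1(i,j)/z_2(i,j), z_2(i,j)/z_1(i,j)) < C⁴ for all i, j. -/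
/-- The internal state sequence of the automaton `(ψ, φ)` with initial state `q`
reading the input tape `k`: `q_0 = q`, `q_{i+1} = φ(q_i, k_i, …, k_{i+β})`. -/
def qSeq (β : ℕ) (φ : (Fin (β + 2) → ℝ) → ℝ) (q : ℝ) (k : ℕ → ℝ) : ℕ → ℝ
  | 0 => q
  | i + 1 => φ (Fin.cons (qSeq β φ q k i) (fun m : Fin (β + 1) => k (i + (m : ℕ))))

/-- The output sequence `A^{(ψ,φ)}_q(k)`: `k'_i = ψ(q_i, k_i, …, k_{i+α})`. -/
def outSeq (α β : ℕ) (ψ : (Fin (α + 2) → ℝ) → ℝ) (φ : (Fin (β + 2) → ℝ) → ℝ)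
    (q : ℝ) (k : ℕ → ℝ) : ℕ → ℝ :=
  fun i => ψ (Fin.cons (qSeq β φ q k i) (fun m : Fin (α + 1) => k (i + (m : ℕ))))

/-! Both rational systems follow the same state dynamics on a logarithmic scale.
Writing `c = log_t C`, one shows by induction along the rows, and along each row for the
states, that `log_t z(i, j)` and `log_t w(i, j)` stay within `c` of the state dynamics
`x(i, j)`, `y(i, j)`: an error `c` in the arguments costs at most `μ c` through the stable map
and `log_t M ≤ (1 - μ) c` through its `(t, M)`-close approximation, and `c < δ` keeps the
arguments inside the stability radius. As the automata agree over `R`, both systems track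
the same `x(i, j)`, so `|log_t (z₁ / z₂)| ≤ 2c`, i.e. the ratio is at most `C² < C⁴`. -/

open Real

/-- `stateRow α β ψ φ q k j i` is the paper's `x(i, j)` for the initial data `x_i = k i`,
`y^j = q j`. -/
def stateRow (α β : ℕ) (ψ : (Fin (α + 2) → ℝ) → ℝ) (φ : (Fin (β + 2) → ℝ) → ℝ)
    (q k : ℕ → ℝ) : ℕ → ℕ → ℝ
  | 0 => k
  | j + 1 => outSeq α β ψ φ (q j) (stateRow α β ψ φ q k j)

structure ExtendsAutomaton {α β : ℕ} (Q S : Set ℝ) (ψ : (Fin (α + 2) → ℝ) → ℝ)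
    (φ : (Fin (β + 2) → ℝ) → ℝ) : Prop where
  mapsTo_out : ∀ (q : ℝ) (s : Fin (α + 1) → ℝ), q ∈ Q → (∀ k, s k ∈ S) → ψ (Fin.cons q s) ∈ S
  mapsTo_state : ∀ (q : ℝ) (s : Fin (β + 1) → ℝ), q ∈ Q → (∀ k, s k ∈ S) → φ (Fin.cons q s) ∈ Q

def StableAt {n : ℕ} (δ μ : ℝ) (ψ : (Fin n → ℝ) → ℝ) (p : Fin n → ℝ) : Prop :=
  ∀ v : Fin n → ℝ, dist v p < δ → |ψ v - ψ p| ≤ μ * dist v p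

structure IsStable {α β : ℕ} (Q S : Set ℝ) (δ μ : ℝ) (ψ : (Fin (α + 2) → ℝ) → ℝ)
    (φ : (Fin (β + 2) → ℝ) → ℝ) : Prop where
  out : ∀ (q : ℝ) (s : Fin (α + 1) → ℝ), q ∈ Q → (∀ k, s k ∈ S) → StableAt δ μ ψ (Fin.cons q s)
  state : ∀ (q : ℝ) (s : Fin (β + 1) → ℝ), q ∈ Q → (∀ k, s k ∈ S) →
    StableAt δ μ φ (Fin.cons q s)

def LogCloseTo {n : ℕ} (t M : ℝ) (f ψ : (Fin n → ℝ) → ℝ) : Prop :=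
  ∀ v : Fin n → ℝ, (∀ k, 0 < v k) → |logb t (f v) - ψ (fun k => logb t (v k))| ≤ logb t M

structure IsLogApprox {α β : ℕ} (t M : ℝ) (f : (Fin (α + 2) → ℝ) → ℝ)
    (g : (Fin (β + 2) → ℝ) → ℝ) (ψ : (Fin (α + 2) → ℝ) → ℝ) (φ : (Fin (β + 2) → ℝ) → ℝ) :
    Prop where
  out_pos : ∀ v : Fin (α + 2) → ℝ, (∀ k, 0 < v k) → 0 < f v
  state_pos : ∀ v : Fin (β + 2) → ℝ, (∀ k, 0 < v k) → 0 < g v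
  out_close : LogCloseTo t M f ψ
  state_close : LogCloseTo t M g φ

structure IsRationalStateSystem {α β : ℕ} (f : (Fin (α + 2) → ℝ) → ℝ)
    (g : (Fin (β + 2) → ℝ) → ℝ) (z w : ℕ → ℕ → ℝ) : Prop where
  out_succ : ∀ i j, z i (j + 1) = f (Fin.cons (w i j) (fun k : Fin (α + 1) => z (i + (k : ℕ)) j))
  state_succ : ∀ i j,
    w (i + 1) j = g (Fin.cons (w i j) (fun k : Fin (β + 1) => z (i + (k : ℕ)) j))

def NearPow (t c x a : ℝ) : Prop :=
  0 < x ∧ |logb t x - a| ≤ c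

theorem nearPow_of_mem_Icc {t C x a : ℝ} (ht : 1 < t) (hC : 0 < C)
    (hlo : C⁻¹ * t ^ a ≤ x) (hhi : x ≤ C * t ^ a) : NearPow t (logb t C) x a := by
  have ht0 : 0 < t := one_pos.trans ht
  have hta : 0 < t ^ a := rpow_pos_of_pos ht0 a
  have hx : 0 < x := lt_of_lt_of_le (by positivity) hlo
  have hlogb : ∀ D : ℝ, 0 < D → logb t (D * t ^ a) = logb t D + a := fun D hD => by
    rw [logb_mul hD.ne' hta.ne', logb_rpow ht0 ht.ne']
  have hlo' := logb_le_logb_of_le ht (by positivity) hlo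
  have hhi' := logb_le_logb_of_le ht hx hhi
  rw [hlogb _ (inv_pos.2 hC), logb_inv] at hlo'
  rw [hlogb _ hC] at hhi'
  exact ⟨hx, abs_le.2 ⟨by linarith, by linarith⟩⟩

theorem div_le_sq_of_nearPow {t C x y a : ℝ} (ht : 1 < t) (hC : 0 < C)
    (hx : NearPow t (logb t C) x a) (hy : NearPow t (logb t C) y a) : x / y ≤ C ^ 2 := by
  have hxy : logb t (x / y) ≤ logb t (C ^ 2) := by
    rw [logb_div hx.1.ne' hy.1.ne', logb_pow, Nat.cast_ofNat]
    linarith [(abs_le.1 hx.2).2, (abs_le.1 hy.2).1]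
  exact (logb_le_logb ht (div_pos hx.1 hy.1) (by positivity)).1 hxy

theorem nearPow_apply_of_stableAt {n : ℕ} {t δ μ M c : ℝ} {f ψ : (Fin n → ℝ) → ℝ}
    {v p : Fin n → ℝ} (hμ : 0 ≤ μ) (hc : 0 ≤ c) (hcδ : c < δ)
    (hMc : logb t M ≤ (1 - μ) * c)
    (hfpos : ∀ v : Fin n → ℝ, (∀ k, 0 < v k) → 0 < f v) (hf : LogCloseTo t M f ψ)
    (hψ : StableAt δ μ ψ p) (hv : ∀ k, NearPow t c (v k) (p k)) :
    NearPow t c (f v) (ψ p) := by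
  have hvpos : ∀ k, 0 < v k := fun k => (hv k).1
  have hdist : dist (fun k => logb t (v k)) p ≤ c :=
    (dist_pi_le_iff hc).2 fun k => (hv k).2
  refine ⟨hfpos v hvpos, ?_⟩
  calc |logb t (f v) - ψ p|
      ≤ |logb t (f v) - ψ (fun k => logb t (v k))| + |ψ (fun k => logb t (v k)) - ψ p| :=
        abs_sub_le _ _ _
    _ ≤ (1 - μ) * c + μ * c := by
        gcongr
        · exact (hf v hvpos).trans hMc
        · exact (hψ _ (hdist.trans_lt hcδ)).trans (by gcongr)
    _ = c := by ring

theorem nearPow_cons {n : ℕ} {t c x a : ℝ} {v p : Fin n → ℝ} (hx : NearPow t c x a)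
    (hv : ∀ k, NearPow t c (v k) (p k)) (k : Fin (n + 1)) :
    NearPow t c ((Fin.cons x v : Fin (n + 1) → ℝ) k) ((Fin.cons a p : Fin (n + 1) → ℝ) k) :=
  Fin.cases (by simpa using hx) (fun m => by simpa using hv m) k

section StateDynamics

variable {α β : ℕ} {Q S : Set ℝ} {ψ : (Fin (α + 2) → ℝ) → ℝ} {φ : (Fin (β + 2) → ℝ) → ℝ}

theorem qSeq_mem (hA : ExtendsAutomaton Q S ψ φ) {q : ℝ} (hq : q ∈ Q) {k : ℕ → ℝ}
    (hk : ∀ i, k i ∈ S) (i : ℕ) : qSeq β φ q k i ∈ Q := by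
  induction i with
  | zero => exact hq
  | succ i ih => exact hA.mapsTo_state _ _ ih fun m => hk _

theorem stateRow_mem (hA : ExtendsAutomaton Q S ψ φ) {q k : ℕ → ℝ} (hq : ∀ j, q j ∈ Q)
    (hk : ∀ i, k i ∈ S) (j i : ℕ) : stateRow α β ψ φ q k j i ∈ S := by
  induction j generalizing i with
  | zero => exact hk i
  | succ j ih => exact hA.mapsTo_out _ _ (qSeq_mem hA (hq j) ih i) fun m => ih _

theorem stateRow_eq_of_outSeq_eq {R : Set ℝ} {ψ' : (Fin (α + 2) → ℝ) → ℝ}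
    {φ' : (Fin (β + 2) → ℝ) → ℝ} (hA : ExtendsAutomaton Q S ψ φ) (hRQ : R ⊆ Q)
    (hagree : ∀ q ∈ R, ∀ k : ℕ → ℝ, (∀ i, k i ∈ S) → outSeq α β ψ φ q k = outSeq α β ψ' φ' q k)
    {q k : ℕ → ℝ} (hq : ∀ j, q j ∈ R) (hk : ∀ i, k i ∈ S) (j : ℕ) :
    stateRow α β ψ φ q k j = stateRow α β ψ' φ' q k j := by
  induction j with
  | zero => rfl
  | succ j ih =>
    rw [stateRow, stateRow, ← ih]
    exact hagree _ (hq j) _ (stateRow_mem hA (fun j => hRQ (hq j)) hk j)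

variable {f : (Fin (α + 2) → ℝ) → ℝ} {g : (Fin (β + 2) → ℝ) → ℝ} {z w : ℕ → ℕ → ℝ}
  {t δ μ M c : ℝ}

theorem nearPow_qSeq (hA : ExtendsAutomaton Q S ψ φ) (hS : IsStable Q S δ μ ψ φ)
    (hfg : IsLogApprox t M f g ψ φ) (hsys : IsRationalStateSystem f g z w)
    (hμ : 0 ≤ μ) (hc : 0 ≤ c) (hcδ : c < δ) (hMc : logb t M ≤ (1 - μ) * c)
    {j : ℕ} {q : ℝ} (hq : q ∈ Q) {k : ℕ → ℝ} (hk : ∀ i, k i ∈ S)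
    (hz : ∀ i, NearPow t c (z i j) (k i)) (hw0 : NearPow t c (w 0 j) q) (i : ℕ) :
    NearPow t c (w i j) (qSeq β φ q k i) := by
  induction i with
  | zero => exact hw0
  | succ i ih =>
    rw [hsys.state_succ]
    exact nearPow_apply_of_stableAt hμ hc hcδ hMc hfg.state_pos hfg.state_close
      (hS.state _ _ (qSeq_mem hA hq hk i) fun m => hk _) (nearPow_cons ih fun m => hz _)

theorem nearPow_stateRow (hA : ExtendsAutomaton Q S ψ φ) (hS : IsStable Q S δ μ ψ φ)
    (hfg : IsLogApprox t M f g ψ φ) (hsys : IsRationalStateSystem f g z w)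
    (hμ : 0 ≤ μ) (hc : 0 ≤ c) (hcδ : c < δ) (hMc : logb t M ≤ (1 - μ) * c)
    {q k : ℕ → ℝ} (hq : ∀ j, q j ∈ Q) (hk : ∀ i, k i ∈ S)
    (hz0 : ∀ i, NearPow t c (z i 0) (k i)) (hw0 : ∀ j, NearPow t c (w 0 j) (q j)) (j i : ℕ) :
    NearPow t c (z i j) (stateRow α β ψ φ q k j i) := by
  induction j generalizing i with
  | zero => exact hz0 i
  | succ j ih =>
    have hrow := stateRow_mem hA hq hk j
    rw [hsys.out_succ]
    exact nearPow_apply_of_stableAt hμ hc hcδ hMc hfg.out_pos hfg.out_close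
      (hS.out _ _ (qSeq_mem hA (hq j) hrow i) fun m => hrow _)
      (nearPow_cons (nearPow_qSeq hA hS hfg hsys hμ hc hcδ hMc (hq j) hrow ih (hw0 j) i)
        fun m => ih _)

end StateDynamics

theorem statement16_general (α β : ℕ) (Q S R : Finset ℝ) (hR : R ⊆ Q) (δ μ : ℝ)
    (hδ0 : 0 < δ) (hμ0 : 0 ≤ μ)
    (ψ1 ψ2 : (Fin (α + 2) → ℝ) → ℝ) (φ1 φ2 : (Fin (β + 2) → ℝ) → ℝ)
    (hext11 : ∀ (q : ℝ) (s : Fin (α + 1) → ℝ), q ∈ Q → (∀ k, s k ∈ S) →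
      ψ1 (Fin.cons q s) ∈ S)
    (hext12 : ∀ (q : ℝ) (s : Fin (β + 1) → ℝ), q ∈ Q → (∀ k, s k ∈ S) →
      φ1 (Fin.cons q s) ∈ Q)
    (hext21 : ∀ (q : ℝ) (s : Fin (α + 1) → ℝ), q ∈ Q → (∀ k, s k ∈ S) →
      ψ2 (Fin.cons q s) ∈ S)
    (hext22 : ∀ (q : ℝ) (s : Fin (β + 1) → ℝ), q ∈ Q → (∀ k, s k ∈ S) →
      φ2 (Fin.cons q s) ∈ Q)
    (hstab11 : ∀ (q : ℝ) (s : Fin (α + 1) → ℝ), q ∈ Q → (∀ k, s k ∈ S) →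
      ∀ v : Fin (α + 2) → ℝ, dist v (Fin.cons q s) < δ →
        |ψ1 v - ψ1 (Fin.cons q s)| ≤ μ * dist v (Fin.cons q s))
    (hstab12 : ∀ (q : ℝ) (s : Fin (β + 1) → ℝ), q ∈ Q → (∀ k, s k ∈ S) →
      ∀ v : Fin (β + 2) → ℝ, dist v (Fin.cons q s) < δ →
        |φ1 v - φ1 (Fin.cons q s)| ≤ μ * dist v (Fin.cons q s))
    (hstab21 : ∀ (q : ℝ) (s : Fin (α + 1) → ℝ), q ∈ Q → (∀ k, s k ∈ S) →
      ∀ v : Fin (α + 2) → ℝ, dist v (Fin.cons q s) < δ →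
        |ψ2 v - ψ2 (Fin.cons q s)| ≤ μ * dist v (Fin.cons q s))
    (hstab22 : ∀ (q : ℝ) (s : Fin (β + 1) → ℝ), q ∈ Q → (∀ k, s k ∈ S) →
      ∀ v : Fin (β + 2) → ℝ, dist v (Fin.cons q s) < δ →
        |φ2 v - φ2 (Fin.cons q s)| ≤ μ * dist v (Fin.cons q s))
    (hagree : ∀ q0 ∈ R, ∀ k : ℕ → ℝ, (∀ i, k i ∈ S) →
      outSeq α β ψ1 φ1 q0 k = outSeq α β ψ2 φ2 q0 k)
    (t M C : ℝ) (ht : 1 < t) (hM : 1 ≤ M) (hC : 1 ≤ C)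
    (hMC : M < C ^ (1 - μ)) (hCδ : Real.log C / Real.log t ≤ δ / 2)
    (f1 f2 : (Fin (α + 2) → ℝ) → ℝ) (g1 g2 : (Fin (β + 2) → ℝ) → ℝ)
    (hf1pos : ∀ v : Fin (α + 2) → ℝ, (∀ k, 0 < v k) → 0 < f1 v)
    (hf2pos : ∀ v : Fin (α + 2) → ℝ, (∀ k, 0 < v k) → 0 < f2 v)
    (hg1pos : ∀ v : Fin (β + 2) → ℝ, (∀ k, 0 < v k) → 0 < g1 v)
    (hg2pos : ∀ v : Fin (β + 2) → ℝ, (∀ k, 0 < v k) → 0 < g2 v)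
    (hf1 : ∀ v : Fin (α + 2) → ℝ, (∀ k, 0 < v k) →
      |Real.log (f1 v) / Real.log t - ψ1 (fun k => Real.log (v k) / Real.log t)|
        ≤ Real.log M / Real.log t)
    (hg1 : ∀ v : Fin (β + 2) → ℝ, (∀ k, 0 < v k) →
      |Real.log (g1 v) / Real.log t - φ1 (fun k => Real.log (v k) / Real.log t)|
        ≤ Real.log M / Real.log t)
    (hf2 : ∀ v : Fin (α + 2) → ℝ, (∀ k, 0 < v k) →
      |Real.log (f2 v) / Real.log t - ψ2 (fun k => Real.log (v k) / Real.log t)|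
        ≤ Real.log M / Real.log t)
    (hg2 : ∀ v : Fin (β + 2) → ℝ, (∀ k, 0 < v k) →
      |Real.log (g2 v) / Real.log t - φ2 (fun k => Real.log (v k) / Real.log t)|
        ≤ Real.log M / Real.log t)
    (k0 q0 : ℕ → ℝ) (hk0 : ∀ i, k0 i ∈ S) (hq0 : ∀ j, q0 j ∈ R)
    (z1 w1 z2 w2 : ℕ → ℕ → ℝ)
    (hz10 : ∀ i, C⁻¹ * t ^ k0 i ≤ z1 i 0 ∧ z1 i 0 ≤ C * t ^ k0 i)
    (hw10 : ∀ j, C⁻¹ * t ^ q0 j ≤ w1 0 j ∧ w1 0 j ≤ C * t ^ q0 j)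
    (hz20 : ∀ i, C⁻¹ * t ^ k0 i ≤ z2 i 0 ∧ z2 i 0 ≤ C * t ^ k0 i)
    (hw20 : ∀ j, C⁻¹ * t ^ q0 j ≤ w2 0 j ∧ w2 0 j ≤ C * t ^ q0 j)
    (hz1 : ∀ i j, z1 i (j + 1) = f1 (Fin.cons (w1 i j) (fun k : Fin (α + 1) => z1 (i + (k : ℕ)) j)))
    (hw1 : ∀ i j, w1 (i + 1) j = g1 (Fin.cons (w1 i j) (fun k : Fin (β + 1) => z1 (i + (k : ℕ)) j)))
    (hz2 : ∀ i j, z2 i (j + 1) = f2 (Fin.cons (w2 i j) (fun k : Fin (α + 1) => z2 (i + (k : ℕ)) j)))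
    (hw2 : ∀ i j, w2 (i + 1) j = g2 (Fin.cons (w2 i j) (fun k : Fin (β + 1) => z2 (i + (k : ℕ)) j))) :
    ∀ i j : ℕ, max (z1 i j / z2 i j) (z2 i j / z1 i j) < C ^ 4 := by
  have hC1 : 1 < C := by
    rcases hC.lt_or_eq with h | rfl
    · exact h
    · rw [one_rpow] at hMC
      linarith
  have hC0 : 0 < C := one_pos.trans hC1
  have hc : 0 ≤ logb t C := logb_nonneg ht hC
  have hcδ : logb t C < δ := by
    rw [log_div_log] at hCδ
    linarith
  have hMc : logb t M ≤ (1 - μ) * logb t C := by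
    rw [← logb_rpow_eq_mul_logb_of_pos hC0]
    exact logb_le_logb_of_le ht (one_pos.trans_le hM) hMC.le
  have hA1 : ExtendsAutomaton (Q : Set ℝ) S ψ1 φ1 := ⟨hext11, hext12⟩
  have hA2 : ExtendsAutomaton (Q : Set ℝ) S ψ2 φ2 := ⟨hext21, hext22⟩
  have hq : ∀ j, q0 j ∈ (Q : Set ℝ) := fun j => hR (hq0 j)
  intro i j
  have h1 := nearPow_stateRow hA1 ⟨hstab11, hstab12⟩ ⟨hf1pos, hg1pos, hf1, hg1⟩ ⟨hz1, hw1⟩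
    hμ0 hc hcδ hMc hq hk0 (fun i => nearPow_of_mem_Icc ht hC0 (hz10 i).1 (hz10 i).2)
    (fun j => nearPow_of_mem_Icc ht hC0 (hw10 j).1 (hw10 j).2) j i
  have h2 := nearPow_stateRow hA2 ⟨hstab21, hstab22⟩ ⟨hf2pos, hg2pos, hf2, hg2⟩ ⟨hz2, hw2⟩
    hμ0 hc hcδ hMc hq hk0 (fun i => nearPow_of_mem_Icc ht hC0 (hz20 i).1 (hz20 i).2)
    (fun j => nearPow_of_mem_Icc ht hC0 (hw20 j).1 (hw20 j).2) j i
  rw [← stateRow_eq_of_outSeq_eq hA1 (Finset.coe_subset.2 hR) hagree hq0 hk0 j] at h2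
  have hC24 : C ^ 2 < C ^ 4 := pow_lt_pow_right₀ hC1 (by norm_num)
  exact max_lt ((div_le_sq_of_nearPow ht hC0 h1 h2).trans_lt hC24)
    ((div_le_sq_of_nearPow ht hC0 h2 h1).trans_lt hC24)

/-- rational state systems attached to two stable extensions of automata
that are equivalent over `R ⊆ Q`, with exponentially comparable initial data, stay at
ratio `< C⁴`. -/
theorem statement16 (α β : ℕ) (Q S R : Finset ℝ) (hR : R ⊆ Q) (δ μ : ℝ)
    (hδ0 : 0 < δ) (hδ1 : δ < 1) (hμ0 : 0 ≤ μ) (hμ1 : μ < 1)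
    (ψ1 ψ2 : (Fin (α + 2) → ℝ) → ℝ) (φ1 φ2 : (Fin (β + 2) → ℝ) → ℝ)
    (hext11 : ∀ (q : ℝ) (s : Fin (α + 1) → ℝ), q ∈ Q → (∀ k, s k ∈ S) →
      ψ1 (Fin.cons q s) ∈ S)
    (hext12 : ∀ (q : ℝ) (s : Fin (β + 1) → ℝ), q ∈ Q → (∀ k, s k ∈ S) →
      φ1 (Fin.cons q s) ∈ Q)
    (hext21 : ∀ (q : ℝ) (s : Fin (α + 1) → ℝ), q ∈ Q → (∀ k, s k ∈ S) →
      ψ2 (Fin.cons q s) ∈ S)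
    (hext22 : ∀ (q : ℝ) (s : Fin (β + 1) → ℝ), q ∈ Q → (∀ k, s k ∈ S) →
      φ2 (Fin.cons q s) ∈ Q)
    (hstab11 : ∀ (q : ℝ) (s : Fin (α + 1) → ℝ), q ∈ Q → (∀ k, s k ∈ S) →
      ∀ v : Fin (α + 2) → ℝ, dist v (Fin.cons q s) < δ →
        |ψ1 v - ψ1 (Fin.cons q s)| ≤ μ * dist v (Fin.cons q s))
    (hstab12 : ∀ (q : ℝ) (s : Fin (β + 1) → ℝ), q ∈ Q → (∀ k, s k ∈ S) →
      ∀ v : Fin (β + 2) → ℝ, dist v (Fin.cons q s) < δ →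
        |φ1 v - φ1 (Fin.cons q s)| ≤ μ * dist v (Fin.cons q s))
    (hstab21 : ∀ (q : ℝ) (s : Fin (α + 1) → ℝ), q ∈ Q → (∀ k, s k ∈ S) →
      ∀ v : Fin (α + 2) → ℝ, dist v (Fin.cons q s) < δ →
        |ψ2 v - ψ2 (Fin.cons q s)| ≤ μ * dist v (Fin.cons q s))
    (hstab22 : ∀ (q : ℝ) (s : Fin (β + 1) → ℝ), q ∈ Q → (∀ k, s k ∈ S) →
      ∀ v : Fin (β + 2) → ℝ, dist v (Fin.cons q s) < δ →
        |φ2 v - φ2 (Fin.cons q s)| ≤ μ * dist v (Fin.cons q s))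
    (hagree : ∀ q0 ∈ R, ∀ k : ℕ → ℝ, (∀ i, k i ∈ S) →
      outSeq α β ψ1 φ1 q0 k = outSeq α β ψ2 φ2 q0 k)
    (t M C : ℝ) (ht : 1 < t) (hM : 1 ≤ M) (hC : 1 ≤ C)
    (hMC : M < C ^ (1 - μ)) (hCδ : Real.log C / Real.log t ≤ δ / 2)
    (f1 f2 : (Fin (α + 2) → ℝ) → ℝ) (g1 g2 : (Fin (β + 2) → ℝ) → ℝ)
    (hf1pos : ∀ v : Fin (α + 2) → ℝ, (∀ k, 0 < v k) → 0 < f1 v)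
    (hf2pos : ∀ v : Fin (α + 2) → ℝ, (∀ k, 0 < v k) → 0 < f2 v)
    (hg1pos : ∀ v : Fin (β + 2) → ℝ, (∀ k, 0 < v k) → 0 < g1 v)
    (hg2pos : ∀ v : Fin (β + 2) → ℝ, (∀ k, 0 < v k) → 0 < g2 v)
    (hf1 : ∀ v : Fin (α + 2) → ℝ, (∀ k, 0 < v k) →
      |Real.log (f1 v) / Real.log t - ψ1 (fun k => Real.log (v k) / Real.log t)|
        ≤ Real.log M / Real.log t)
    (hg1 : ∀ v : Fin (β + 2) → ℝ, (∀ k, 0 < v k) →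
      |Real.log (g1 v) / Real.log t - φ1 (fun k => Real.log (v k) / Real.log t)|
        ≤ Real.log M / Real.log t)
    (hf2 : ∀ v : Fin (α + 2) → ℝ, (∀ k, 0 < v k) →
      |Real.log (f2 v) / Real.log t - ψ2 (fun k => Real.log (v k) / Real.log t)|
        ≤ Real.log M / Real.log t)
    (hg2 : ∀ v : Fin (β + 2) → ℝ, (∀ k, 0 < v k) →
      |Real.log (g2 v) / Real.log t - φ2 (fun k => Real.log (v k) / Real.log t)|
        ≤ Real.log M / Real.log t)
    (k0 q0 : ℕ → ℝ) (hk0 : ∀ i, k0 i ∈ S) (hq0 : ∀ j, q0 j ∈ R)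
    (z1 w1 z2 w2 : ℕ → ℕ → ℝ)
    (hz10 : ∀ i, C⁻¹ * t ^ k0 i ≤ z1 i 0 ∧ z1 i 0 ≤ C * t ^ k0 i)
    (hw10 : ∀ j, C⁻¹ * t ^ q0 j ≤ w1 0 j ∧ w1 0 j ≤ C * t ^ q0 j)
    (hz20 : ∀ i, C⁻¹ * t ^ k0 i ≤ z2 i 0 ∧ z2 i 0 ≤ C * t ^ k0 i)
    (hw20 : ∀ j, C⁻¹ * t ^ q0 j ≤ w2 0 j ∧ w2 0 j ≤ C * t ^ q0 j)
    (hz1 : ∀ i j, z1 i (j + 1) = f1 (Fin.cons (w1 i j) (fun k : Fin (α + 1) => z1 (i + (k : ℕ)) j)))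
    (hw1 : ∀ i j, w1 (i + 1) j = g1 (Fin.cons (w1 i j) (fun k : Fin (β + 1) => z1 (i + (k : ℕ)) j)))
    (hz2 : ∀ i j, z2 i (j + 1) = f2 (Fin.cons (w2 i j) (fun k : Fin (α + 1) => z2 (i + (k : ℕ)) j)))
    (hw2 : ∀ i j, w2 (i + 1) j = g2 (Fin.cons (w2 i j) (fun k : Fin (β + 1) => z2 (i + (k : ℕ)) j))) :
    ∀ i j : ℕ, max (z1 i j / z2 i j) (z2 i j / z1 i j) < C ^ 4 :=
  statement16_general α β Q S R hR δ μ hδ0 hμ0 ψ1 ψ2 φ1 φ2 hext11 hext12 hext21 hext22 hstab11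
    hstab12 hstab21 hstab22 hagree t M C ht hM hC hMC hCδ f1 f2 g1 g2 hf1pos hf2pos hg1pos hg2pos
    hf1 hg1 hf2 hg2 k0 q0 hk0 hq0 z1 w1 z2 w2 hz10 hw10 hz20 hw20 hz1 hw1 hz2 hw2
end
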